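/- arXiv:2407.13384 — 7 statements merged into one kernel-verified Lean document; each statement's English description precedes it below -/
import Mathlib

section
/- Characteristic function of the evolving categories multinomial (ECM) distribution: for every family of real numbers ξ = (ξ_{k,l})_{1≤k≤n, 1≤l≤m_k}, one has ∫_{P^N} exp( i · ∑_{k=1}^n ∑_{l=1}^{m_k} ξ_{k,l} · Q_{k,l}(ω) ) dμ^{⊗N}(ω) = ( ∑_{l_1=1}^{m_1} ⋯ ∑_{l_n=1}^{m_n} exp( i (ξ_{1,l_1} + ⋯ + ξ_{n,l_n}) ) · p_{l_1,…,l_n} )^N. -/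
open MeasureTheory

/-!
Writing `Q_{k,l}(ω) = #{j | ω_j(k) = l}`, the exponent `∑_{k,l} ξ_{k,l} Q_{k,l}(ω)` regroups as
`∑_j ∑_k ξ_{k, ω_j(k)}`, a sum of independent contributions of the `N` individuals. Hence the
exponential factors over the individuals, and Fubini for the product measure `μ^{⊗N}` turns the
integral into the `N`-th power of the one-individual characteristic function, which is a finite sum
over full paths.
-/

theorem Finset.sum_mul_card_fiber_eq_sum {ι α R : Type*} [Fintype ι] [Fintype α]
    [NonAssocSemiring R] (f : ι → α) (g : α → R) :
    ∑ a, g a * (Nat.card {i // f i = a} : R) = ∑ i, g (f i) := by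
  classical
  calc ∑ a, g a * (Nat.card {i // f i = a} : R)
      = ∑ a, ∑ i ∈ univ.filter (fun i => f i = a), g (f i) := by
        refine sum_congr rfl fun a _ => ?_
        rw [sum_congr rfl fun i hi => by rw [(mem_filter.mp hi).2], sum_const,
          Nat.card_eq_fintype_card, Fintype.card_subtype, nsmul_eq_mul, Nat.cast_comm]
    _ = ∑ i, g (f i) := sum_fiberwise univ f _

theorem integral_exp_sum_pi_eq_pow {ι E : Type*} [Fintype ι] {mE : MeasurableSpace E}
    (μ : Measure E) [SigmaFinite μ] (φ : E → ℂ) :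
    ∫ x : ι → E, Complex.exp (∑ i, φ (x i)) ∂(Measure.pi fun _ => μ)
      = (∫ y, Complex.exp (φ y) ∂μ) ^ Fintype.card ι := by
  simp_rw [Complex.exp_sum]
  exact integral_fintype_prod_eq_pow (fun y => Complex.exp (φ y))

theorem ecm_characteristic_function_general
    {n N : ℕ}
    {m : Fin n → ℕ}
    (μ : Measure (Π k : Fin n, Fin (m k))) [IsProbabilityMeasure μ]
    (ξ : Π k : Fin n, Fin (m k) → ℝ) :
    ∫ ω : Fin N → Π k : Fin n, Fin (m k),
        Complex.exp (Complex.I *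
          ∑ k : Fin n, ∑ l : Fin (m k),
            (ξ k l : ℂ) * (Nat.card {j : Fin N // ω j k = l} : ℂ))
        ∂(Measure.pi fun _ : Fin N => μ)
      = (∑ x : Π k : Fin n, Fin (m k),
          Complex.exp (Complex.I * ∑ k : Fin n, (ξ k (x k) : ℂ)) *
            ((μ {x}).toReal : ℂ)) ^ N := by
  have regroup : ∀ ω : Fin N → Π k : Fin n, Fin (m k),
      Complex.I * ∑ k, ∑ l, (ξ k l : ℂ) * (Nat.card {j : Fin N // ω j k = l} : ℂ)
        = ∑ j, Complex.I * ∑ k, (ξ k (ω j k) : ℂ) := fun ω => by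
    simp_rw [Finset.sum_mul_card_fiber_eq_sum (fun j => ω j _), ← Finset.mul_sum]
    rw [Finset.sum_comm]
  simp_rw [regroup]
  rw [integral_exp_sum_pi_eq_pow μ fun x => Complex.I * ∑ k, (ξ k (x k) : ℂ), Fintype.card_fin, integral_fintype .of_finite]
  simp only [measureReal_def, Complex.real_smul, mul_comm]

/-- Characteristic function of the evolving categories multinomial (ECM) distribution. -/
theorem ecm_characteristic_function
    {n N : ℕ} (hn : 1 ≤ n) (hN : 1 ≤ N)
    {m : Fin n → ℕ} (hm : ∀ k, 1 ≤ m k)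
    (μ : Measure (Π k : Fin n, Fin (m k))) [IsProbabilityMeasure μ]
    (ξ : Π k : Fin n, Fin (m k) → ℝ) :
    ∫ ω : Fin N → Π k : Fin n, Fin (m k),
        Complex.exp (Complex.I *
          ∑ k : Fin n, ∑ l : Fin (m k),
            (ξ k l : ℂ) * (Nat.card {j : Fin N // ω j k = l} : ℂ))
        ∂(Measure.pi fun _ : Fin N => μ)
      = (∑ x : Π k : Fin n, Fin (m k),
          Complex.exp (Complex.I * ∑ k : Fin n, (ξ k (x k) : ℂ)) *
            ((μ {x}).toReal : ℂ)) ^ N :=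
  ecm_characteristic_function_general μ ξ
end

section
/- Probability generating function of the ECM distribution: for every family of complex numbers z = (z_{k,l})_{1≤k≤n, 1≤l≤m_k} with |z_{k,l}| ≤ 1 for all k, l, one has ∫_{P^N} ∏_{k=1}^n ∏_{l=1}^{m_k} z_{k,l}^{Q_{k,l}(ω)} dμ^{⊗N}(ω) = ( ∑_{l_1=1}^{m_1} ⋯ ∑_{l_n=1}^{m_n} p_{l_1,…,l_n} · ∏_{k=1}^n z_{k,l_k} )^N. -/
open MeasureTheory

theorem Fintype.prod_pow_natCard_fiber {ι α M : Type*} [Fintype ι] [Fintype α] [CommMonoid M]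
    (ω : ι → α) (f : α → M) :
    ∏ a, f a ^ Nat.card {j // ω j = a} = ∏ j, f (ω j) := by
  classical
  rw [← Finset.prod_fiberwise' Finset.univ ω f]
  refine Finset.prod_congr rfl fun a _ => ?_
  rw [Finset.prod_const, Nat.card_eq_fintype_card, Fintype.card_subtype]

theorem ecm_probability_generating_function_general
    {n N : ℕ}
    {m : Fin n → ℕ}
    (μ : Measure (Π k : Fin n, Fin (m k))) [IsProbabilityMeasure μ]
    (z : Π k : Fin n, Fin (m k) → ℂ) :
    ∫ ω : Fin N → Π k : Fin n, Fin (m k),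
        ∏ k : Fin n, ∏ l : Fin (m k), z k l ^ (Nat.card {j : Fin N // ω j k = l})
        ∂(Measure.pi fun _ : Fin N => μ)
      = (∑ x : Π k : Fin n, Fin (m k),
          ((μ {x}).toReal : ℂ) * ∏ k : Fin n, z k (x k)) ^ N := by
  -- Regrouped by individual, the integrand is a product of i.i.d. factors.
  have regroup : ∀ ω : Fin N → Π k : Fin n, Fin (m k),
      ∏ k : Fin n, ∏ l : Fin (m k), z k l ^ (Nat.card {j : Fin N // ω j k = l})
        = ∏ j, ∏ k, z k (ω j k) := fun ω => by
    rw [Finset.prod_comm]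
    exact Finset.prod_congr rfl fun k _ => Fintype.prod_pow_natCard_fiber (ω · k) (z k)
  simp_rw [regroup]
  rw [integral_fintype_prod_eq_pow (μ := μ) fun x => ∏ k, z k (x k), Fintype.card_fin,
    integral_fintype Integrable.of_finite]
  simp only [Complex.real_smul, measureReal_def]

/-- Probability generating function of the evolving categories multinomial (ECM)
distribution. -/
theorem ecm_probability_generating_function
    {n N : ℕ} (hn : 1 ≤ n) (hN : 1 ≤ N)
    {m : Fin n → ℕ} (hm : ∀ k, 1 ≤ m k)
    (μ : Measure (Π k : Fin n, Fin (m k))) [IsProbabilityMeasure μ]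
    (z : Π k : Fin n, Fin (m k) → ℂ)
    (hz : ∀ k l, ‖z k l‖ ≤ 1) :
    ∫ ω : Fin N → Π k : Fin n, Fin (m k),
        ∏ k : Fin n, ∏ l : Fin (m k), z k l ^ (Nat.card {j : Fin N // ω j k = l})
        ∂(Measure.pi fun _ : Fin N => μ)
      = (∑ x : Π k : Fin n, Fin (m k),
          ((μ {x}).toReal : ℂ) * ∏ k : Fin n, z k (x k)) ^ N :=
  ecm_probability_generating_function_general μ z
end

section
/- Two-times conditional distribution of the ECM distribution is a sum of independent multinomials (Poisson-multinomial): let k ≠ k' in {1,…,n}, let q : {1,…,m_k} → ℕ satisfy ∑_l q_l = N and μ^{⊗N}({ω : Q_{k,l}(ω) = q_l for all l}) > 0, and let q' : {1,…,m_{k'}} → ℕ satisfy ∑_{l'} q'_{l'} = N. Then μ^{⊗N}({ω : Q_{k',l'}(ω) = q'_{l'} for all l'} | {ω : Q_{k,l}(ω) = q_l for all l}) = ∑_{y} ∏_{l=1}^{m_k} [ ( q_l! / ∏_{l'=1}^{m_{k'}} y_{l,l'}! ) · ∏_{l'=1}^{m_{k'}} ( p^{(k,k')}_{l,l'} / p^{(k)}_l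 )^{y_{l,l'}} ], where the sum ranges over all matrices of natural numbers y = (y_{l,l'})_{1≤l≤m_k, 1≤l'≤m_{k'}} with ∑_{l'} y_{l,l'} = q_l for every l and ∑_l y_{l,l'} = q'_{l'} for every l'. -/
open MeasureTheory Finset

section Aux

variable {J L : Type*} [Fintype J] [Fintype L] [DecidableEq J] [DecidableEq L]

private lemma sigma_fix {L : Type*} {q : L → ℕ} (t : Σ l : L, Fin (q l)) (l : L) (h : t.1 = l)
    (hc : q t.1 = q l) : (⟨l, Fin.cast hc t.2⟩ : Σ l : L, Fin (q l)) = t := by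
  subst h; rfl

/-- Bijections over `f` with prescribed first component correspond to families of
fiber bijections. -/
private def fiberEquivAux (q : L → ℕ) (f : J → L) :
    {e : J ≃ (Σ l : L, Fin (q l)) // ∀ j, (e j).1 = f j} ≃
      (Π l : L, ({j : J // f j = l} ≃ Fin (q l))) where
  toFun := fun ⟨e, he⟩ l =>
    { toFun := fun ⟨j, hj⟩ => Fin.cast (by rw [he j, hj]) (e j).2
      invFun := fun i => ⟨e.symm ⟨l, i⟩, by
        have h := he (e.symm ⟨l, i⟩); rw [e.apply_symm_apply] at h; exact h.symm⟩
      left_inv := by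
        rintro ⟨j, hj⟩
        have : (⟨(f j), Fin.cast (by rw [he j]) (e j).2⟩ : Σ l : L, Fin (q l)) = e j :=
          sigma_fix _ _ (he j) (by rw [he j])
        subst hj
        simp [this]
      right_inv := by
        intro i
        dsimp only
        apply Fin.ext
        simpa using congrArg (fun t : Σ l : L, Fin (q l) => (t.2 : ℕ))
          (e.apply_symm_apply ⟨l, i⟩) }
  invFun := fun g =>
    ⟨{ toFun := fun j => ⟨f j, g (f j) ⟨j, rfl⟩⟩
       invFun := fun t => ((g t.1).symm t.2).1
       left_inv := by
         intro j
         dsimp only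
         exact congrArg Subtype.val ((g (f j)).symm_apply_apply ⟨j, rfl⟩)
       right_inv := by
         rintro ⟨l, i⟩
         dsimp only
         have hl : f (((g l).symm i).1 : J) = l := ((g l).symm i).2
         have key : ∀ (j : J) (hj : f j = l),
             (⟨f j, g (f j) ⟨j, rfl⟩⟩ : Σ l : L, Fin (q l)) = ⟨l, g l ⟨j, hj⟩⟩ := by
           intro j hj; subst hj; rfl
         rw [key _ hl]
         have : (⟨((g l).symm i).1, hl⟩ : {j : J // f j = l}) = (g l).symm i :=
           Subtype.ext rfl
         rw [this, (g l).apply_symm_apply] },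
     fun j => rfl⟩
  left_inv := by
    rintro ⟨e, he⟩
    apply Subtype.ext
    apply Equiv.ext
    intro j
    exact sigma_fix (e j) (f j) (he j) (by rw [he j])
  right_inv := by
    intro g
    funext l
    ext ⟨j, hj⟩
    subst hj
    rfl

private def fstFiberEquiv (q : L → ℕ) (l : L) :
    {t : Σ l' : L, Fin (q l') // t.1 = l} ≃ Fin (q l) where
  toFun := fun ⟨t, ht⟩ => Fin.cast (by rw [ht]) t.2
  invFun := fun i => ⟨⟨l, i⟩, rfl⟩
  left_inv := by rintro ⟨t, ht⟩; exact Subtype.ext (sigma_fix t l ht (by rw [ht]))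
  right_inv := fun i => rfl

/-- The number of functions with prescribed fiber cardinalities is the multinomial
coefficient. -/
private lemma card_fiber_count (q : L → ℕ) (hq : ∑ l, q l = Fintype.card J) :
    ((univ : Finset (J → L)).filter
        (fun f => ∀ l, (univ.filter fun j => f j = l).card = q l)).card
      * ∏ l, (q l).factorial = (Fintype.card J).factorial := by
  classical
  set T := Σ l : L, Fin (q l) with hT
  have hcardT : Fintype.card T = Fintype.card J := by
    simp [hT, Fintype.card_sigma, hq]
  set F : Finset (J → L) :=
    (univ : Finset (J → L)).filter
      (fun f => ∀ l, (univ.filter fun j => f j = l).card = q l) with hF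
  set Φ : (J ≃ T) → (J → L) := fun e j => (e j).1 with hΦ
  have hmaps : ∀ e : J ≃ T, Φ e ∈ F := by
    intro e
    simp only [hF, mem_filter, mem_univ, true_and]
    intro l
    rw [← Fintype.card_subtype]
    rw [Fintype.card_congr ((Equiv.subtypeEquiv e (fun j => Iff.rfl)).trans (fstFiberEquiv q l))]
    simp
  have key : ∀ f ∈ F, ((univ : Finset (J ≃ T)).filter (fun e => Φ e = f)).card
      = ∏ l, (q l).factorial := by
    intro f hf
    rw [← Fintype.card_subtype]
    have e1 : {e : J ≃ T // Φ e = f} ≃ {e : J ≃ T // ∀ j, (e j).1 = f j} :=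
      Equiv.subtypeEquivRight (fun e => funext_iff)
    rw [Fintype.card_congr (e1.trans (fiberEquivAux q f))]
    rw [Fintype.card_pi]
    refine Finset.prod_congr rfl fun l _ => ?_
    have hcard : Fintype.card {j : J // f j = l} = q l := by
      rw [Fintype.card_subtype]
      exact (mem_filter.mp hf).2 l
    rw [Fintype.card_equiv (Fintype.equivOfCardEq (by simp [hcard]))]
    rw [hcard]
  have hcount : (Fintype.card J).factorial = ∑ f ∈ F, ∏ l, (q l).factorial := by
    rw [← Fintype.card_equiv (Fintype.equivOfCardEq hcardT.symm : J ≃ T)]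
    rw [← Finset.card_univ, Finset.card_eq_sum_card_fiberwise (fun e _ => hmaps e)]
    exact Finset.sum_congr rfl key
  rw [hcount, Finset.sum_const, smul_eq_mul]

/-- Core computation: total weight of tuples with prescribed fiber counts. -/
private lemma core_sum {X Λ : Type*} [Fintype X] [Fintype Λ] [DecidableEq X] [DecidableEq Λ]
    {R : Type*} [CommSemiring R] (p : X → R) (φ : X → Λ) (q : Λ → ℕ) (N : ℕ)
    (hq : ∑ l, q l = N) :
    ∑ ω ∈ (univ : Finset (Fin N → X)).filter
        (fun ω => ∀ l, (univ.filter fun j => φ (ω j) = l).card = q l),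
      ∏ j, p (ω j)
    = (Nat.multinomial univ q : R) *
        ∏ l, (∑ x ∈ univ.filter (fun x => φ x = l), p x) ^ (q l) := by
  classical
  set F : Finset (Fin N → Λ) :=
    (univ : Finset (Fin N → Λ)).filter
      (fun f => ∀ l, (univ.filter fun j => f j = l).card = q l) with hF
  set A : Finset (Fin N → X) :=
    (univ : Finset (Fin N → X)).filter
      (fun ω => ∀ l, (univ.filter fun j => φ (ω j) = l).card = q l) with hA
  have hmaps : ∀ ω ∈ A, (fun j => φ (ω j)) ∈ F := by
    intro ω hω
    simp only [hF, mem_filter, mem_univ, true_and]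
    exact (mem_filter.mp hω).2
  rw [← Finset.sum_fiberwise_of_maps_to hmaps]
  have inner : ∀ f ∈ F, ∑ ω ∈ A.filter (fun ω => (fun j => φ (ω j)) = f), ∏ j, p (ω j)
      = ∏ l, (∑ x ∈ univ.filter (fun x => φ x = l), p x) ^ (q l) := by
    intro f hf
    have hA' : A.filter (fun ω => (fun j => φ (ω j)) = f)
        = Fintype.piFinset (fun j => univ.filter (fun x => φ x = f j)) := by
      ext ω
      simp only [hA, mem_filter, mem_univ, true_and, Fintype.mem_piFinset, funext_iff]
      constructor
      · rintro ⟨-, h2⟩ j; exact h2 j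
      · intro h
        refine ⟨fun l => ?_, h⟩
        have : ∀ j, φ (ω j) = f j := h
        simp only [this]
        exact (mem_filter.mp hf).2 l
    rw [hA', ← Finset.prod_univ_sum]
    rw [← Finset.prod_fiberwise_of_maps_to (fun j _ => mem_univ (f j))
      (fun j => ∑ x ∈ univ.filter (fun x => φ x = f j), p x)]
    refine Finset.prod_congr rfl fun l _ => ?_
    rw [Finset.prod_congr rfl (fun j hj => by
      rw [(mem_filter.mp hj).2]),
      Finset.prod_const, (mem_filter.mp hf).2 l]
  rw [Finset.sum_congr rfl inner, Finset.sum_const, nsmul_eq_mul]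
  congr 1
  have h1 := card_fiber_count (J := Fin N) q (by simpa using hq)
  have h2 := Nat.multinomial_spec (univ : Finset Λ) q
  rw [hq] at h2
  simp only [Fintype.card_fin] at h1
  have : F.card = Nat.multinomial univ q :=
    Nat.eq_of_mul_eq_mul_right (Nat.prod_factorial_pos _ _)
      (by rw [h1, ← h2, mul_comm])
  rw [this]

private lemma measure_eq_sum_singleton' {X : Type*} [Fintype X] [MeasurableSpace X]
    [MeasurableSingletonClass X] (μ : Measure X) (S : Set X) :
    μ S = ∑ x ∈ S.toFinite.toFinset, μ {x} := by
  have h : S = ⋃ x ∈ S.toFinite.toFinset, ({x} : Set X) := by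
    ext x; simp [Set.Finite.mem_toFinset]
  rw [h, measure_biUnion_finset (fun x _ x' _ hxx' => Set.disjoint_singleton.mpr hxx')
    (fun x _ => measurableSet_singleton x)]
  exact Finset.sum_congr (by ext x; simp [Set.Finite.mem_toFinset]) fun _ _ => rfl

private lemma pi_measure_eq_sum {X : Type*} [Fintype X] [MeasurableSpace X]
    [MeasurableSingletonClass X] (μ : Measure X) [SigmaFinite μ] {N : ℕ}
    (S : Set (Fin N → X)) :
    (Measure.pi fun _ : Fin N => μ) S = ∑ ω ∈ S.toFinite.toFinset, ∏ j, μ {ω j} := by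
  rw [measure_eq_sum_singleton']
  refine Finset.sum_congr rfl fun ω _ => ?_
  rw [show ({ω} : Set (Fin N → X)) = Set.univ.pi (fun j => {ω j}) by
    ext f; simp [funext_iff]]
  exact Measure.pi_pi _ _

/-- Probability of a fiber-count event under an i.i.d. product measure. -/
private lemma measure_count_event {X Λ : Type*} [Fintype X] [DecidableEq X] [MeasurableSpace X]
    [MeasurableSingletonClass X] [Fintype Λ] [DecidableEq Λ]
    (μ : Measure X) [IsProbabilityMeasure μ] (N : ℕ) (φ : X → Λ) (q : Λ → ℕ)
    (hq : ∑ l, q l = N) :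
    (Measure.pi fun _ : Fin N => μ)
        {ω : Fin N → X | ∀ l, Nat.card {j : Fin N // φ (ω j) = l} = q l}
      = (Nat.multinomial univ q : ENNReal) * ∏ l, (μ {x | φ x = l}) ^ (q l) := by
  classical
  rw [pi_measure_eq_sum]
  have hfs : {ω : Fin N → X | ∀ l, Nat.card {j : Fin N // φ (ω j) = l} = q l}.toFinite.toFinset
      = (univ : Finset (Fin N → X)).filter
        (fun ω => ∀ l, (univ.filter fun j => φ (ω j) = l).card = q l) := by
    ext ω
    simp [Set.Finite.mem_toFinset, Nat.card_eq_fintype_card, Fintype.card_subtype]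
  rw [hfs, core_sum (fun x => μ ({x} : Set X)) φ q N hq]
  congr 1
  refine Finset.prod_congr rfl fun l _ => ?_
  congr 1
  rw [measure_eq_sum_singleton' μ {x | φ x = l}]
  exact Finset.sum_congr (by ext x; simp [Set.Finite.mem_toFinset]) fun _ _ => rfl

end Aux
/-- Two-times conditional distribution of the ECM distribution is a sum of
independent multinomials (Poisson-multinomial). -/
theorem ecm_two_times_conditional
    {n N : ℕ} (hn : 1 ≤ n) (hN : 1 ≤ N)
    {m : Fin n → ℕ} (hm : ∀ k, 1 ≤ m k)
    (μ : Measure (Π k : Fin n, Fin (m k))) [IsProbabilityMeasure μ]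
    (k k' : Fin n) (hkk' : k ≠ k')
    (q : Fin (m k) → ℕ) (hq : ∑ l, q l = N)
    (q' : Fin (m k') → ℕ) (hq' : ∑ l', q' l' = N)
    (hpos : 0 < (Measure.pi fun _ : Fin N => μ)
        {ω : Fin N → Π k'' : Fin n, Fin (m k'') |
          ∀ l : Fin (m k), Nat.card {j : Fin N // ω j k = l} = q l}) :
    ((Measure.pi fun _ : Fin N => μ)
        ({ω : Fin N → Π k'' : Fin n, Fin (m k'') |
            ∀ l' : Fin (m k'), Nat.card {j : Fin N // ω j k' = l'} = q' l'} ∩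
          {ω | ∀ l : Fin (m k), Nat.card {j : Fin N // ω j k = l} = q l})).toReal /
      ((Measure.pi fun _ : Fin N => μ)
        {ω : Fin N → Π k'' : Fin n, Fin (m k'') |
          ∀ l : Fin (m k), Nat.card {j : Fin N // ω j k = l} = q l}).toReal
    = ∑ᶠ (y : Fin (m k) → Fin (m k') → ℕ)
        (_ : (∀ l, ∑ l', y l l' = q l) ∧ (∀ l', ∑ l, y l l' = q' l')),
        ∏ l : Fin (m k),
          (((q l).factorial : ℝ) / ∏ l' : Fin (m k'), ((y l l').factorial : ℝ)) *
            ∏ l' : Fin (m k'),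
              ((μ {x | x k = l ∧ x k' = l'}).toReal / (μ {x | x k = l}).toReal) ^ (y l l') := by
  classical
  set SB : Set (Fin N → Π k'' : Fin n, Fin (m k'')) :=
    {ω | ∀ l : Fin (m k), Nat.card {j : Fin N // ω j k = l} = q l} with hSB
  set SA : Set (Fin N → Π k'' : Fin n, Fin (m k'')) :=
    {ω | ∀ l' : Fin (m k'), Nat.card {j : Fin N // ω j k' = l'} = q' l'} with hSA
  -- Step 1 : probability of the conditioning event
  have hB : (Measure.pi fun _ : Fin N => μ) SB
      = ((Nat.multinomial univ q : ℕ) : ENNReal) * ∏ l, (μ {x | x k = l}) ^ (q l) :=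
    measure_count_event μ N (fun x => x k) q hq
  -- the finset of contingency tables
  set Y : Finset (Fin (m k) → Fin (m k') → ℕ) :=
    ((univ : Finset (Fin (m k) → Fin (m k') → Fin (N + 1))).image
      (fun g l l' => (g l l' : ℕ))).filter
      (fun y => (∀ l, ∑ l', y l l' = q l) ∧ (∀ l', ∑ l, y l l' = q' l')) with hYdef
  have hYmem : ∀ y, y ∈ Y ↔
      ((∀ l, ∑ l', y l l' = q l) ∧ (∀ l', ∑ l, y l l' = q' l')) := by
    intro y
    constructor
    · exact fun hy => (mem_filter.mp hy).2
    · intro hy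
      have hbound : ∀ l l', y l l' < N + 1 := by
        intro l l'
        have h1 : y l l' ≤ q l := by
          rw [← hy.1 l]
          exact Finset.single_le_sum (fun _ _ => Nat.zero_le _) (mem_univ _)
        have h2 : q l ≤ N := by
          rw [← hq]
          exact Finset.single_le_sum (fun _ _ => Nat.zero_le _) (mem_univ _)
        omega
      exact mem_filter.mpr
        ⟨mem_image.mpr ⟨fun l l' => ⟨y l l', hbound l l'⟩, mem_univ _, rfl⟩, hy⟩
  -- pair filters versus conjunction filters
  have hpairset : ∀ (ω : Fin N → Π k'' : Fin n, Fin (m k''))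
      (z : Fin (m k) × Fin (m k')),
      (univ.filter fun j => (ω j k, ω j k') = z)
        = (univ.filter fun j => ω j k = z.1 ∧ ω j k' = z.2) := by
    intro ω z
    apply Finset.filter_congr
    intro j _
    simp [Prod.ext_iff]
  -- row and column sums of the count matrix
  have hrow : ∀ (ω : Fin N → Π k'' : Fin n, Fin (m k'')) (l : Fin (m k)),
      ∑ l', (univ.filter fun j => ω j k = l ∧ ω j k' = l').card
        = (univ.filter fun j => ω j k = l).card := by
    intro ω l
    conv_rhs => rw [Finset.card_eq_sum_card_fiberwise
      (f := fun j => ω j k') (t := univ) (fun j _ => mem_univ _)]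
    exact Finset.sum_congr rfl fun l' _ => by rw [Finset.filter_filter]
  have hcol : ∀ (ω : Fin N → Π k'' : Fin n, Fin (m k'')) (l' : Fin (m k')),
      ∑ l, (univ.filter fun j => ω j k = l ∧ ω j k' = l').card
        = (univ.filter fun j => ω j k' = l').card := by
    intro ω l'
    conv_rhs => rw [Finset.card_eq_sum_card_fiberwise
      (f := fun j => ω j k) (t := univ) (fun j _ => mem_univ _)]
    refine Finset.sum_congr rfl fun l _ => ?_
    rw [Finset.filter_filter]
    apply congrArg
    apply Finset.filter_congr
    intro j _
    exact and_comm
  have hsumz : ∀ y ∈ Y, ∑ z : Fin (m k) × Fin (m k'), y z.1 z.2 = N := by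
    intro y hy
    rw [Fintype.sum_prod_type,
      Finset.sum_congr rfl fun l (_ : l ∈ univ) => ((hYmem y).mp hy).1 l]
    exact hq
  -- Step 2 : probability of the intersection
  have hAB : (Measure.pi fun _ : Fin N => μ) (SA ∩ SB)
      = ∑ y ∈ Y, ((Nat.multinomial (univ : Finset (Fin (m k) × Fin (m k')))
            (fun z => y z.1 z.2) : ℕ) : ENNReal) *
          ∏ l, ∏ l', (μ {x | x k = l ∧ x k' = l'}) ^ (y l l') := by
    rw [pi_measure_eq_sum]
    set ABf : Finset (Fin N → Π k'' : Fin n, Fin (m k'')) :=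
      univ.filter (fun ω =>
        (∀ l', (univ.filter fun j => ω j k' = l').card = q' l') ∧
        (∀ l, (univ.filter fun j => ω j k = l).card = q l)) with hABf
    have hfs : (SA ∩ SB).toFinite.toFinset = ABf := by
      ext ω
      rw [Set.Finite.mem_toFinset, Set.mem_inter_iff]
      simp [hSA, hSB, hABf, Set.mem_setOf_eq, Nat.card_eq_fintype_card,
        Fintype.card_subtype]
    rw [hfs]
    have hmapsAB : ∀ ω ∈ ABf,
        (fun l l' => (univ.filter fun j => ω j k = l ∧ ω j k' = l').card) ∈ Y := by
      intro ω hω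
      rw [hYmem]
      obtain ⟨h1, h2⟩ := (mem_filter.mp hω).2
      exact ⟨fun l => by rw [hrow ω l]; exact h2 l,
        fun l' => by rw [hcol ω l']; exact h1 l'⟩
    rw [← Finset.sum_fiberwise_of_maps_to hmapsAB (fun ω => ∏ j, μ {ω j})]
    refine Finset.sum_congr rfl fun y hy => ?_
    have hCf : ABf.filter
        (fun ω => (fun l l' => (univ.filter fun j => ω j k = l ∧ ω j k' = l').card) = y)
        = univ.filter (fun ω : Fin N → Π k'' : Fin n, Fin (m k'') =>
            ∀ z : Fin (m k) × Fin (m k'),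
              (univ.filter fun j => (ω j k, ω j k') = z).card = y z.1 z.2) := by
      ext ω
      simp only [mem_filter, mem_univ, true_and, hABf, funext_iff]
      constructor
      · rintro ⟨-, h⟩ z
        rw [hpairset ω z]
        exact h z.1 z.2
      · intro h
        have hc : ∀ l l',
            (univ.filter fun j => ω j k = l ∧ ω j k' = l').card = y l l' := by
          intro l l'
          rw [← hpairset ω (l, l')]
          exact h (l, l')
        refine ⟨⟨fun l' => ?_, fun l => ?_⟩, fun l l' => hc l l'⟩
        · rw [← hcol ω l', Finset.sum_congr rfl fun l (_ : l ∈ univ) => hc l l']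
          exact ((hYmem y).mp hy).2 l'
        · rw [← hrow ω l, Finset.sum_congr rfl fun l' (_ : l' ∈ univ) => hc l l']
          exact ((hYmem y).mp hy).1 l
    rw [hCf]
    have hcore := core_sum (R := ENNReal) (fun x : Π k'' : Fin n, Fin (m k'') => μ {x})
      (fun x => (x k, x k')) (fun z => y z.1 z.2) N (hsumz y hy)
    rw [hcore]
    congr 1
    rw [← Fintype.prod_prod_type
      (f := fun z : Fin (m k) × Fin (m k') => (μ {x | x k = z.1 ∧ x k' = z.2}) ^ (y z.1 z.2))]
    refine Finset.prod_congr rfl fun z _ => ?_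
    congr 1
    rw [measure_eq_sum_singleton' μ {x | x k = z.1 ∧ x k' = z.2}]
    exact Finset.sum_congr
      (by ext x; simp [Set.Finite.mem_toFinset, Prod.ext_iff]) fun _ _ => rfl
  -- Step 3 : pass to real numbers
  have hBr : ((Measure.pi fun _ : Fin N => μ) SB).toReal
      = ((Nat.multinomial univ q : ℕ) : ℝ) * ∏ l, (μ {x | x k = l}).toReal ^ q l := by
    rw [hB, ENNReal.toReal_mul, ENNReal.toReal_prod]
    simp [ENNReal.toReal_pow, ENNReal.toReal_natCast]
  have hABr : ((Measure.pi fun _ : Fin N => μ) (SA ∩ SB)).toReal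
      = ∑ y ∈ Y, ((Nat.multinomial (univ : Finset (Fin (m k) × Fin (m k')))
            (fun z => y z.1 z.2) : ℕ) : ℝ) *
          ∏ l, ∏ l', (μ {x | x k = l ∧ x k' = l'}).toReal ^ (y l l') := by
    rw [hAB, ENNReal.toReal_sum]
    · refine Finset.sum_congr rfl fun y _ => ?_
      rw [ENNReal.toReal_mul, ENNReal.toReal_prod]
      simp [ENNReal.toReal_prod, ENNReal.toReal_pow, ENNReal.toReal_natCast]
    · intro y _
      refine ENNReal.mul_ne_top (ENNReal.natCast_ne_top _) ?_
      refine (ENNReal.prod_lt_top fun l _ => ?_).ne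
      refine ENNReal.prod_lt_top fun l' _ => ?_
      exact (ENNReal.pow_ne_top (measure_ne_top _ _)).lt_top
  have hDpos : 0 < ((Measure.pi fun _ : Fin N => μ) SB).toReal :=
    ENNReal.toReal_pos hpos.ne' (measure_ne_top _ _)
  have hD : ((Measure.pi fun _ : Fin N => μ) SB).toReal ≠ 0 := hDpos.ne'
  have hfac : ∀ l, (μ {x | x k = l}).toReal ≠ 0 ∨ q l = 0 := by
    intro l
    by_contra hcon
    push_neg at hcon
    have h0 : (μ {x | x k = l}).toReal ^ q l = 0 := by
      rw [hcon.1]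
      exact zero_pow hcon.2
    refine hD ?_
    rw [hBr]
    exact mul_eq_zero_of_right _ (Finset.prod_eq_zero (mem_univ l) h0)
  -- the factorial identities
  have hmulq := Nat.multinomial_spec (univ : Finset (Fin (m k))) q
  rw [hq] at hmulq
  -- convert the finsum into a sum over Y
  have hfinsum : (∑ᶠ (y : Fin (m k) → Fin (m k') → ℕ)
        (_ : (∀ l, ∑ l', y l l' = q l) ∧ (∀ l', ∑ l, y l l' = q' l')),
        ∏ l : Fin (m k),
          (((q l).factorial : ℝ) / ∏ l' : Fin (m k'), ((y l l').factorial : ℝ)) *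
            ∏ l' : Fin (m k'),
              ((μ {x | x k = l ∧ x k' = l'}).toReal / (μ {x | x k = l}).toReal) ^ (y l l'))
      = ∑ y ∈ Y,
        ∏ l : Fin (m k),
          (((q l).factorial : ℝ) / ∏ l' : Fin (m k'), ((y l l').factorial : ℝ)) *
            ∏ l' : Fin (m k'),
              ((μ {x | x k = l ∧ x k' = l'}).toReal / (μ {x | x k = l}).toReal) ^ (y l l') := by
    rw [← finsum_mem_coe_finset]
    refine finsum_congr fun y => ?_
    rw [finsum_eq_if, finsum_eq_if]
    refine if_congr ?_ rfl rfl
    rw [Finset.mem_coe, hYmem]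
  rw [hfinsum, hABr, Finset.sum_div]
  refine Finset.sum_congr rfl fun y hy => ?_
  obtain ⟨hyrow, hycol⟩ := (hYmem y).mp hy
  -- factorial identity for this y
  have hmulz := Nat.multinomial_spec (univ : Finset (Fin (m k) × Fin (m k')))
    (fun z => y z.1 z.2)
  rw [hsumz y hy] at hmulz
  have hFy : (∏ l, ∏ l', ((y l l').factorial : ℝ)) ≠ 0 := by positivity
  have hFq : (∏ l, ((q l).factorial : ℝ)) ≠ 0 := by positivity
  have hcastz : (∏ l, ∏ l', ((y l l').factorial : ℝ)) *
      ((Nat.multinomial (univ : Finset (Fin (m k) × Fin (m k'))) (fun z => y z.1 z.2) : ℕ) : ℝ)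
      = (N.factorial : ℝ) := by
    rw [← Fintype.prod_prod_type
      (f := fun z : Fin (m k) × Fin (m k') => ((y z.1 z.2).factorial : ℝ))]
    exact_mod_cast congrArg (Nat.cast : ℕ → ℝ) hmulz
  have hcastq : (∏ l, ((q l).factorial : ℝ)) * ((Nat.multinomial univ q : ℕ) : ℝ)
      = (N.factorial : ℝ) := by
    exact_mod_cast congrArg (Nat.cast : ℕ → ℝ) hmulq
  have hMz : ((Nat.multinomial (univ : Finset (Fin (m k) × Fin (m k')))
        (fun z => y z.1 z.2) : ℕ) : ℝ)
      = ((Nat.multinomial univ q : ℕ) : ℝ) *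
          ∏ l, (((q l).factorial : ℝ) / ∏ l', ((y l l').factorial : ℝ)) := by
    rw [Finset.prod_div_distrib]
    have h1 : ((Nat.multinomial (univ : Finset (Fin (m k) × Fin (m k')))
          (fun z => y z.1 z.2) : ℕ) : ℝ)
        = (N.factorial : ℝ) / (∏ l, ∏ l', ((y l l').factorial : ℝ)) := by
      rw [eq_div_iff hFy, mul_comm]
      exact hcastz
    rw [h1, ← hcastq, mul_comm (∏ l, ((q l).factorial : ℝ)), mul_div_assoc]
  -- per-row identity
  have hl : ∀ l : Fin (m k),
      (∏ l', ((μ {x | x k = l ∧ x k' = l'}).toReal / (μ {x | x k = l}).toReal) ^ (y l l')) *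
          (μ {x | x k = l}).toReal ^ q l
        = ∏ l', (μ {x | x k = l ∧ x k' = l'}).toReal ^ (y l l') := by
    intro l
    rcases hfac l with hp | hq0
    · simp only [div_pow]
      rw [Finset.prod_div_distrib, Finset.prod_pow_eq_pow_sum, hyrow l]
      exact div_mul_cancel₀ _ (pow_ne_zero _ hp)
    · have hy0 : ∀ l', y l l' = 0 := by
        intro l'
        exact Finset.sum_eq_zero_iff.mp (by rw [hyrow l, hq0]) l' (mem_univ _)
      simp [hy0, hq0]
  rw [div_eq_iff hD, hBr, hMz]
  have hBC : (∏ l, ((∏ l', ((μ {x | x k = l ∧ x k' = l'}).toReal /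
        (μ {x | x k = l}).toReal) ^ (y l l')) * (μ {x | x k = l}).toReal ^ q l))
      = ∏ l, ∏ l', (μ {x | x k = l ∧ x k' = l'}).toReal ^ (y l l') :=
    Finset.prod_congr rfl fun l _ => hl l
  rw [← hBC, Finset.prod_mul_distrib, Finset.prod_mul_distrib]
  ring
end

section
/- The Snapshot arrangement follows an ECM distribution: the joint distribution of the arrangement ( (Q_{k,1}, …, Q_{k,m_k}, R_k) )_{k=1,…,n} coincides with the distribution of the counts of N i.i.d. categorical paths on ∏_{k=1}^n {1, …, m_k + 1} whose full path probabilities are π_{l_1,…,l_n} = ∫_{(ℝ^d)^n} ∏_{k=1}^n w_k(x) dν(x), where w_k(x) = p · 1{ x(k) ∈ A_{k,l_k} } when l_k ≤ m_k, and w_k(x) = 1 − p · 1{ x(k) ∈ A_{k,1} ∪ ⋯ ∪ A_{k,m_k} } when l_k = m_k + 1. -/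
/-!
Give individual `j` the categorical path whose `k`-th entry is `l` when it is detected at time
`k` inside `A k l`, and the extra category `m k + 1` otherwise. The Snapshot counts are exactly
the category counts of these `N` paths. The records `(Z j, D j ·)` are i.i.d. with law
`ν ⊗ Ber(p)^⊗n`, so the paths are i.i.d. too, and for a fixed position `z` the detection flags
leading to the path `x` form a box whose `Ber(p)^⊗n`-mass is `∏ₖ wₖ(z)`; integrating over `ν`
gives `π_x`.
-/

open MeasureTheory ProbabilityTheory

section Category

variable {X ι : Type*} {m : ι → ℕ} (A : ∀ k, Fin (m k) → Set X)

open Classical in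
/-- `Fin.last (m k)` is the non-detection category `m_k + 1`; `l.castSucc` is the region `A k l`. -/
noncomputable def snapCategory (k : ι) (w : X) (b : Bool) : Fin (m k + 1) :=
  if h : b = true ∧ ∃ l, w ∈ A k l then h.2.choose.castSucc else Fin.last (m k)

noncomputable def snapPath (z : ι → X) (b : ι → Bool) : ∀ k, Fin (m k + 1) :=
  fun k => snapCategory A k (z k) (b k)

/-- The factor `w_k` of the path probabilities, for the category `v` at time `k`. -/
noncomputable def snapWeight (p : ℝ) (k : ι) (v : Fin (m k + 1)) (w : X) : ℝ :=
  if h : (v : ℕ) < m k then (A k ⟨v, h⟩).indicator (fun _ => p) w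
  else 1 - (⋃ l, A k l).indicator (fun _ => p) w

variable {A}

lemma snapCategory_eq_castSucc_iff (hA : ∀ k, Pairwise (Function.onFun Disjoint (A k)))
    {k : ι} {w : X} {b : Bool} {l : Fin (m k)} :
    snapCategory A k w b = l.castSucc ↔ b = true ∧ w ∈ A k l := by
  unfold snapCategory
  split_ifs with h
  · rw [Fin.castSucc_inj]
    refine ⟨fun hl => hl ▸ ⟨h.1, h.2.choose_spec⟩, fun hbl => ?_⟩
    by_contra hne
    exact Set.disjoint_left.mp (hA k hne) h.2.choose_spec hbl.2
  · exact iff_of_false (Fin.castSucc_lt_last l).ne' fun hbl => h ⟨hbl.1, l, hbl.2⟩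

lemma snapCategory_eq_last_iff {k : ι} {w : X} {b : Bool} :
    snapCategory A k w b = Fin.last (m k) ↔ ¬(b = true ∧ ∃ l, w ∈ A k l) := by
  unfold snapCategory
  split_ifs with h
  · exact iff_of_false (Fin.castSucc_lt_last _).ne (not_not.mpr h)
  · exact iff_of_true rfl h

lemma bernoulliMeasure_setOf_snapCategory_eq
    (hA : ∀ k, Pairwise (Function.onFun Disjoint (A k))) (p : unitInterval) (k : ι)
    (v : Fin (m k + 1)) (w : X) :
    Ber(true, false, p) {b | snapCategory A k w b = v}
      = ENNReal.ofReal (snapWeight A p k v w) := by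
  classical
  have hcoe (q : unitInterval) :
      ((unitInterval.toNNReal q : NNReal) : ENNReal) = ENNReal.ofReal q := by
    rw [← ENNReal.ofReal_coe_nnreal, unitInterval.coe_toNNReal]
  rw [bernoulliMeasure_apply p (Set.toFinite _).measurableSet]
  induction v using Fin.lastCases with
  | last =>
    by_cases hw : ∃ l, w ∈ A k l
    · simp [snapCategory_eq_last_iff, snapWeight, hw, hcoe]
    · simp [snapCategory_eq_last_iff, snapWeight, hw]
  | cast l =>
    by_cases hw : w ∈ A k l
    · simp [snapCategory_eq_castSucc_iff hA, snapWeight, hw, hcoe]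
    · simp [snapCategory_eq_castSucc_iff hA, snapWeight, hw]

lemma snapWeight_mem_Icc {p : ℝ} (hp : p ∈ Set.Icc 0 1) (k : ι) (v : Fin (m k + 1)) (w : X) :
    snapWeight A p k v w ∈ Set.Icc 0 1 := by
  obtain ⟨hp0, hp1⟩ := hp
  unfold snapWeight Set.indicator
  split_ifs <;> constructor <;> linarith

lemma pi_bernoulliMeasure_setOf_snapPath_eq [Fintype ι]
    (hA : ∀ k, Pairwise (Function.onFun Disjoint (A k))) (p : unitInterval) (z : ι → X)
    (x : ∀ k, Fin (m k + 1)) :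
    Measure.pi (fun _ : ι => Ber(true, false, p)) {b | snapPath A z b = x}
      = ENNReal.ofReal (∏ k, snapWeight A p k (x k) (z k)) := by
  have hbox : {b | snapPath A z b = x}
      = Set.univ.pi fun k => {bk | snapCategory A k (z k) bk = x k} := by
    ext b
    simp [snapPath, funext_iff, Set.mem_pi]
  rw [hbox, Measure.pi_pi,
    ENNReal.ofReal_prod_of_nonneg fun k _ => (snapWeight_mem_Icc p.2 k (x k) (z k)).1]
  exact Finset.prod_congr rfl fun k _ =>
    bernoulliMeasure_setOf_snapCategory_eq hA p k (x k) (z k)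

variable [MeasurableSpace X]

lemma measurable_snapCategory (hAm : ∀ k l, MeasurableSet (A k l))
    (hA : ∀ k, Pairwise (Function.onFun Disjoint (A k))) (k : ι) :
    Measurable fun wb : X × Bool => snapCategory A k wb.1 wb.2 := by
  refine measurable_to_countable' fun v => ?_
  induction v using Fin.lastCases with
  | last =>
    have hpre : (fun wb : X × Bool => snapCategory A k wb.1 wb.2) ⁻¹' {Fin.last (m k)}
        = ((⋃ l, A k l) ×ˢ {true})ᶜ := by
      ext ⟨w, b⟩
      simp [snapCategory_eq_last_iff, and_comm]
    rw [hpre]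
    exact ((MeasurableSet.iUnion (hAm k)).prod (measurableSet_singleton _)).compl
  | cast l =>
    have hpre : (fun wb : X × Bool => snapCategory A k wb.1 wb.2) ⁻¹' {l.castSucc}
        = A k l ×ˢ {true} := by
      ext ⟨w, b⟩
      simp [snapCategory_eq_castSucc_iff hA, and_comm]
    rw [hpre]
    exact (hAm k l).prod (measurableSet_singleton _)

lemma measurable_snapPath (hAm : ∀ k l, MeasurableSet (A k l))
    (hA : ∀ k, Pairwise (Function.onFun Disjoint (A k))) :
    Measurable fun zb : (ι → X) × (ι → Bool) => snapPath A zb.1 zb.2 :=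
  measurable_pi_lambda _ fun k =>
    (measurable_snapCategory hAm hA k).comp
      (f := fun zb : (ι → X) × (ι → Bool) => (zb.1 k, zb.2 k)) (by fun_prop)

lemma measurable_snapWeight (hAm : ∀ k l, MeasurableSet (A k l)) (p : ℝ) (k : ι)
    (v : Fin (m k + 1)) : Measurable (snapWeight A p k v) := by
  unfold snapWeight
  split_ifs
  · exact measurable_const.indicator (hAm k _)
  · exact measurable_const.sub (measurable_const.indicator (MeasurableSet.iUnion (hAm k)))

lemma map_snapPath_apply_singleton [Fintype ι] (hAm : ∀ k l, MeasurableSet (A k l))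
    (hA : ∀ k, Pairwise (Function.onFun Disjoint (A k))) (p : unitInterval)
    (ν : Measure (ι → X)) [IsFiniteMeasure ν] (x : ∀ k, Fin (m k + 1)) :
    (ν.prod (Measure.pi fun _ => Ber(true, false, p))).map (fun zb => snapPath A zb.1 zb.2) {x}
      = ENNReal.ofReal (∫ z, ∏ k, snapWeight A p k (x k) (z k) ∂ν) := by
  have hmeas : Measurable fun z : ι → X => ∏ k, snapWeight A p k (x k) (z k) :=
    Finset.measurable_prod _ fun k _ => (measurable_snapWeight hAm p k (x k)).comp
      (measurable_pi_apply k)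
  have hbound (z : ι → X) : ∏ k, snapWeight A p k (x k) (z k) ∈ Set.Icc 0 1 :=
    ⟨Finset.prod_nonneg fun k _ => (snapWeight_mem_Icc p.2 k _ _).1,
      Finset.prod_le_one (fun k _ => (snapWeight_mem_Icc p.2 k _ _).1)
        fun k _ => (snapWeight_mem_Icc p.2 k _ _).2⟩
  have hint : Integrable (fun z : ι → X => ∏ k, snapWeight A p k (x k) (z k)) ν :=
    (integrable_const 1).mono' hmeas.aestronglyMeasurable <| ae_of_all _ fun z => by
      rw [Real.norm_of_nonneg (hbound z).1]
      exact (hbound z).2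
  rw [Measure.map_apply (measurable_snapPath hAm hA) (measurableSet_singleton x),
    Measure.prod_apply (measurable_snapPath hAm hA (measurableSet_singleton x)),
    ofReal_integral_eq_lintegral_ofReal hint (ae_of_all _ fun z => (hbound z).1)]
  exact lintegral_congr fun z => pi_bernoulliMeasure_setOf_snapPath_eq hA p z x

lemma map_snapPath_eq [Fintype ι] (hAm : ∀ k l, MeasurableSet (A k l))
    (hA : ∀ k, Pairwise (Function.onFun Disjoint (A k))) (p : unitInterval)
    (ν : Measure (ι → X)) [IsFiniteMeasure ν] (μπ : Measure (∀ k, Fin (m k + 1)))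
    [IsFiniteMeasure μπ]
    (hπ : ∀ x, (μπ {x}).toReal = ∫ z, ∏ k, snapWeight A p k (x k) (z k) ∂ν) :
    (ν.prod (Measure.pi fun _ => Ber(true, false, p))).map (fun zb => snapPath A zb.1 zb.2)
      = μπ := by
  refine Measure.ext_of_singleton fun x => ?_
  rw [map_snapPath_apply_singleton hAm hA, ← hπ x, ENNReal.ofReal_toReal (measure_ne_top μπ {x})]

end Category

section Counting

variable {X ι : Type*} {m : ι → ℕ} {N : ℕ}

noncomputable def snapshotCounts (A : ∀ k, Fin (m k) → Set X) (z : Fin N → ι → X)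
    (b : Fin N → ι → Bool) (k : ι) (l : Fin (m k + 1)) : ℕ :=
  if h : (l : ℕ) < m k then Nat.card {j // z j k ∈ A k ⟨l, h⟩ ∧ b j k = true}
  else N - ∑ l', Nat.card {j // z j k ∈ A k l' ∧ b j k = true}

noncomputable def pathCounts (c : Fin N → ∀ k, Fin (m k + 1)) (k : ι) (l : Fin (m k + 1)) : ℕ :=
  Nat.card {j // c j k = l}

lemma card_fiber_last_eq_card_sub_sum {J : Type*} [Fintype J] {M : ℕ} (c : J → Fin (M + 1)) :
    Nat.card {j // c j = Fin.last M}
      = Fintype.card J - ∑ l : Fin M, Nat.card {j // c j = l.castSucc} := by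
  classical
  have hfib : Fintype.card J = ∑ v : Fin (M + 1), Nat.card {j // c j = v} := by
    simp only [Nat.card_eq_fintype_card, Fintype.card_subtype]
    exact Finset.card_eq_sum_card_fiberwise fun j _ => Finset.mem_univ (c j)
  rw [hfib, Fin.sum_univ_castSucc]
  omega

lemma snapshotCounts_eq_pathCounts {A : ∀ k, Fin (m k) → Set X}
    (hA : ∀ k, Pairwise (Function.onFun Disjoint (A k))) (z : Fin N → ι → X)
    (b : Fin N → ι → Bool) :
    snapshotCounts A z b = pathCounts fun j => snapPath A (z j) (b j) := by
  have hdetected (k : ι) (l : Fin (m k)) :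
      Nat.card {j // snapPath A (z j) (b j) k = l.castSucc}
        = Nat.card {j // z j k ∈ A k l ∧ b j k = true} :=
    Nat.card_congr <| Equiv.subtypeEquivRight fun j =>
      (snapCategory_eq_castSucc_iff hA).trans and_comm
  funext k l
  induction l using Fin.lastCases with
  | last =>
    simp only [snapshotCounts, pathCounts, Fin.val_last, lt_irrefl, dite_false,
      card_fiber_last_eq_card_sub_sum, Fintype.card_fin, hdetected]
  | cast l =>
    simp only [snapshotCounts, pathCounts, Fin.val_castSucc, Fin.is_lt, dite_true, Fin.eta,
      hdetected]

lemma measurable_pathCounts [Fintype ι] :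
    Measurable (pathCounts : (Fin N → ∀ k, Fin (m k + 1)) → ∀ k : ι, Fin (m k + 1) → ℕ) :=
  measurable_to_countable' fun _ => (Set.toFinite _).measurableSet

end Counting

section Independence

variable {Ω ι κ α β : Type*} [MeasurableSpace Ω] [MeasurableSpace α] [MeasurableSpace β]
  [Fintype ι] [Fintype κ] {P : Measure Ω}

lemma map_eq_bernoulliMeasure [IsProbabilityMeasure P] {f : Ω → Bool} (hf : Measurable f)
    {p : unitInterval} (hp : P {ω | f ω = true} = ENNReal.ofReal p) :
    P.map f = Ber(true, false, p) := by
  refine Measure.ext_of_singleton fun b => ?_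
  rw [Measure.map_apply hf (measurableSet_singleton b)]
  cases b
  · rw [show f ⁻¹' {false} = {ω | f ω = true}ᶜ by ext; simp,
      prob_compl_eq_one_sub (s := {ω | f ω = true}) (hf (measurableSet_singleton true)), hp,
      ← ENNReal.ofReal_one, ← ENNReal.ofReal_sub _ p.2.1]
    simp [← ENNReal.ofReal_coe_nnreal]
  · change P {ω | f ω = true} = _
    simp [hp, ← ENNReal.ofReal_coe_nnreal]

lemma map_pair_eq_pi_prod_pi [IsProbabilityMeasure P] {X : ι → Ω → α} {Y : ι → κ → Ω → β}
    (hX : ∀ i, Measurable (X i)) (hY : ∀ i j, Measurable (Y i j))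
    (hXind : iIndepFun X P) (hYind : iIndepFun (fun ij : ι × κ => Y ij.1 ij.2) P)
    (hXY : IndepFun (fun ω i => X i ω) (fun ω (ij : ι × κ) => Y ij.1 ij.2 ω) P) :
    P.map (fun ω i => (X i ω, fun j => Y i j ω))
      = Measure.pi fun i => (P.map (X i)).prod (Measure.pi fun j => P.map (Y i j)) := by
  have _ (i : ι) (j : κ) : IsProbabilityMeasure (P.map (Y i j)) :=
    Measure.isProbabilityMeasure_map (hY i j).aemeasurable
  have hXlaw := (iIndepFun_iff_map_fun_eq_pi_map fun i => (hX i).aemeasurable).mp hXind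
  have hYlaw := (iIndepFun_iff_map_fun_eq_pi_map fun ij : ι × κ =>
    (hY ij.1 ij.2).aemeasurable).mp hYind
  have hcurry : (Measure.pi fun ij : ι × κ => P.map (Y ij.1 ij.2)).map
      (MeasurableEquiv.curry ι κ β) = Measure.pi fun i => Measure.pi fun j => P.map (Y i j) := by
    simpa only [Measure.infinitePi_eq_pi] using
      Measure.infinitePi_map_curry fun i j => P.map (Y i j)
  have hXmeas : Measurable fun ω i => X i ω := measurable_pi_lambda _ hX
  have hYmeas : Measurable fun ω (ij : ι × κ) => Y ij.1 ij.2 ω :=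
    measurable_pi_lambda _ fun ij => hY ij.1 ij.2
  -- regroup `((Xᵢ)ᵢ, (Yᵢⱼ)ᵢⱼ)` into `(Xᵢ, (Yᵢⱼ)ⱼ)ᵢ` by currying and `arrowProdEquivProdArrow`
  rw [← (measurePreserving_arrowProdEquivProdArrow α (κ → β) ι _ _).symm.map_eq,
    ← hcurry, ← Measure.map_id (μ := Measure.pi fun i => P.map (X i)), ← hXlaw, ← hYlaw,
    Measure.map_prod_map _ _ measurable_id (MeasurableEquiv.measurable _),
    ← (indepFun_iff_map_prod_eq_prod_map_map hXmeas.aemeasurable hYmeas.aemeasurable).mp hXY,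
    Measure.map_map (by fun_prop) (hXmeas.prodMk hYmeas),
    Measure.map_map (MeasurableEquiv.measurable _) (by fun_prop)]
  rfl

lemma map_pi_map_eq_pi {X : Ω → ι → α} (hX : Measurable X) {μ : ι → Measure α}
    (hXlaw : P.map X = Measure.pi μ) {g : α → β} (hg : Measurable g) {ρ : ι → Measure β}
    [∀ i, SigmaFinite (ρ i)] (hρ : ∀ i, (μ i).map g = ρ i) :
    P.map (fun ω i => g (X ω i)) = Measure.pi ρ := by
  have _ (i : ι) : SigmaFinite ((μ i).map g) := hρ i ▸ inferInstance
  refine (Measure.map_map (g := fun x i => g (x i)) (by fun_prop) hX).symm.trans ?_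
  rw [hXlaw, Measure.pi_map_pi fun _ => hg.aemeasurable]
  exact congrArg Measure.pi (funext hρ)

end Independence

theorem snapshot_is_ecm_general
    {Ω : Type*} [MeasurableSpace Ω] (P : Measure Ω) [IsProbabilityMeasure P]
    {d N n : ℕ}
    (Z : Fin N → Ω → (Fin n → (Fin d → ℝ)))
    (hZmeas : ∀ j, Measurable (Z j))
    (ν : Measure (Fin n → (Fin d → ℝ)))
    (hlaw : ∀ j, Measure.map (Z j) P = ν)
    (hZindep : iIndepFun Z P)
    {m : Fin n → ℕ}
    (A : Π k : Fin n, Fin (m k) → Set (Fin d → ℝ))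
    (hAmeas : ∀ k l, MeasurableSet (A k l))
    (hAdisj : ∀ k, Pairwise (Function.onFun Disjoint (A k)))
    (p : ℝ) (hp0 : 0 ≤ p) (hp1 : p ≤ 1)
    (D : Fin N → Fin n → Ω → Bool)
    (hDmeas : ∀ j k, Measurable (D j k))
    (hDp : ∀ j k, P {ω | D j k ω = true} = ENNReal.ofReal p)
    (hDindep : iIndepFun
        (fun jk : Fin N × Fin n => D jk.1 jk.2) P)
    (hZD : IndepFun (fun ω (j : Fin N) => Z j ω)
        (fun ω (jk : Fin N × Fin n) => D jk.1 jk.2 ω) P)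
    (μπ : Measure (Π k : Fin n, Fin (m k + 1))) [IsProbabilityMeasure μπ]
    (hπ : ∀ x : Π k : Fin n, Fin (m k + 1),
      (μπ {x}).toReal
        = ∫ y, (∏ k : Fin n,
            if h : (x k : ℕ) < m k
              then (A k ⟨(x k : ℕ), h⟩).indicator (fun _ => p) (y k)
              else 1 - (⋃ l' : Fin (m k), A k l').indicator (fun _ => p) (y k)) ∂ν) :
    Measure.map
      (fun ω => fun (k : Fin n) (l : Fin (m k + 1)) =>
        if h : (l : ℕ) < m k
          then Nat.card {j : Fin N // Z j ω k ∈ A k ⟨(l : ℕ), h⟩ ∧ D j k ω = true}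
          else N - ∑ l' : Fin (m k),
            Nat.card {j : Fin N // Z j ω k ∈ A k l' ∧ D j k ω = true}) P
    = Measure.map
      (fun (ω' : Fin N → Π k : Fin n, Fin (m k + 1)) =>
        fun (k : Fin n) (l : Fin (m k + 1)) => Nat.card {j : Fin N // ω' j k = l})
      (Measure.pi fun _ : Fin N => μπ) := by
  set β := Ber(true, false, (⟨p, hp0, hp1⟩ : unitInterval))
  have hDlaw (j : Fin N) (k : Fin n) : P.map (D j k) = β :=
    map_eq_bernoulliMeasure (hDmeas j k) (hDp j k)
  have hrecords := map_pair_eq_pi_prod_pi hZmeas hDmeas hZindep hDindep hZD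
  simp only [hlaw, hDlaw] at hrecords
  have hpath (j : Fin N) :
      (ν.prod (Measure.pi fun _ => β)).map (fun zb => snapPath A zb.1 zb.2) = μπ :=
    have : IsProbabilityMeasure ν :=
      hlaw j ▸ Measure.isProbabilityMeasure_map (hZmeas j).aemeasurable
    map_snapPath_eq hAmeas hAdisj _ ν μπ hπ
  have hrecords_meas : Measurable fun ω j => (Z j ω, fun k => D j k ω) :=
    measurable_pi_lambda _ fun j => (hZmeas j).prodMk (measurable_pi_lambda _ (hDmeas j))
  have hpaths := map_pi_map_eq_pi hrecords_meas hrecords (measurable_snapPath hAmeas hAdisj) hpath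
  have hpaths_meas : Measurable fun ω j => snapPath A (Z j ω) fun k => D j k ω :=
    measurable_pi_lambda _ fun j =>
      (measurable_snapPath hAmeas hAdisj).comp ((measurable_pi_apply j).comp hrecords_meas)
  change P.map (fun ω => snapshotCounts A (fun j => Z j ω) fun j k => D j k ω)
    = (Measure.pi fun _ => μπ).map pathCounts
  simp_rw [snapshotCounts_eq_pathCounts hAdisj]
  dsimp only at hpaths
  rw [← hpaths, Measure.map_map measurable_pathCounts hpaths_meas]
  rfl

/-- The Snapshot arrangement follows an ECM distribution, with full path probabilities
`π_{l₁,…,lₙ} = ∫ ∏ₖ wₖ dν` where `wₖ = p·1_{A_{k,lₖ}}(x(k))` for `lₖ ≤ mₖ` and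
`wₖ = 1 − p·1_{A_{k,1} ∪ ⋯ ∪ A_{k,mₖ}}(x(k))` for the non-detection category. -/
theorem snapshot_is_ecm
    {Ω : Type*} [MeasurableSpace Ω] (P : Measure Ω) [IsProbabilityMeasure P]
    {d N n : ℕ} (hd : 1 ≤ d) (hN : 1 ≤ N) (hn : 1 ≤ n)
    (t : Fin n → ℝ) (ht : StrictMono t)
    (Z : Fin N → Ω → (Fin n → (Fin d → ℝ)))
    (hZmeas : ∀ j, Measurable (Z j))
    (ν : Measure (Fin n → (Fin d → ℝ)))
    (hlaw : ∀ j, Measure.map (Z j) P = ν)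
    (hZindep : iIndepFun Z P)
    {m : Fin n → ℕ}
    (A : Π k : Fin n, Fin (m k) → Set (Fin d → ℝ))
    (hAmeas : ∀ k l, MeasurableSet (A k l))
    (hAdisj : ∀ k, Pairwise (Function.onFun Disjoint (A k)))
    (p : ℝ) (hp0 : 0 ≤ p) (hp1 : p ≤ 1)
    (D : Fin N → Fin n → Ω → Bool)
    (hDmeas : ∀ j k, Measurable (D j k))
    (hDp : ∀ j k, P {ω | D j k ω = true} = ENNReal.ofReal p)
    (hDindep : iIndepFun
        (fun jk : Fin N × Fin n => D jk.1 jk.2) P)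
    (hZD : IndepFun (fun ω (j : Fin N) => Z j ω)
        (fun ω (jk : Fin N × Fin n) => D jk.1 jk.2 ω) P)
    (μπ : Measure (Π k : Fin n, Fin (m k + 1))) [IsProbabilityMeasure μπ]
    (hπ : ∀ x : Π k : Fin n, Fin (m k + 1),
      (μπ {x}).toReal
        = ∫ y, (∏ k : Fin n,
            if h : (x k : ℕ) < m k
              then (A k ⟨(x k : ℕ), h⟩).indicator (fun _ => p) (y k)
              else 1 - (⋃ l' : Fin (m k), A k l').indicator (fun _ => p) (y k)) ∂ν) :
    Measure.map
      (fun ω => fun (k : Fin n) (l : Fin (m k + 1)) =>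
        if h : (l : ℕ) < m k
          then Nat.card {j : Fin N // Z j ω k ∈ A k ⟨(l : ℕ), h⟩ ∧ D j k ω = true}
          else N - ∑ l' : Fin (m k),
            Nat.card {j : Fin N // Z j ω k ∈ A k l' ∧ D j k ω = true}) P
    = Measure.map
      (fun (ω' : Fin N → Π k : Fin n, Fin (m k + 1)) =>
        fun (k : Fin n) (l : Fin (m k + 1)) => Nat.card {j : Fin N // ω' j k = l})
      (Measure.pi fun _ : Fin N => μπ) :=
  snapshot_is_ecm_general P Z hZmeas ν hlaw hZindep A hAmeas hAdisj p hp0 hp1 D hDmeas hDp hDindep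
    hZD μπ hπ
end

section
/- Under Conditions C1, C2 and Axioms 1–3, the law of the capture time T_c has no atoms in (t_0, ∞): for every t > t_0, ℙ(T_c = t) = 0. -/
open MeasureTheory Set Filter Topology

/-- Conditional probability of the event `A` given the event `B`:
`ℙ(A | B) = ℙ(A ∩ B) / ℙ(B)`. -/
noncomputable def cprob {Ω : Type*} [MeasurableSpace Ω] (P : Measure Ω) (A B : Set Ω) : ℝ :=
  (P (A ∩ B)).toReal / (P B).toReal

/-- Under Conditions C1–C2 and Axioms 1–3, the law of the capture time `T_c` has no
atoms in `(t₀, ∞)`: for every `t > t₀`, `ℙ(T_c = t) = 0`. -/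
theorem capture_time_no_atoms
    {Ω : Type*} [MeasurableSpace Ω] (P : Measure Ω) [IsProbabilityMeasure P]
    (t0 : ℝ) {d : ℕ} (hd : 1 ≤ d)
    (Dc : Set (Fin d → ℝ)) (hDc : MeasurableSet Dc)
    (X : ℝ → Ω → (Fin d → ℝ)) (hX : ∀ t, Measurable (X t))
    (Tc : Ω → EReal) (hTc : Measurable Tc)
    (α : ℝ) (hα : 0 < α)
    (hC1 : ∀ t > t0, 0 < P {ω | X t ω ∈ Dc})
    (hC2 : ContinuousOn
      (fun q : ℝ × ℝ => (P ({ω | X q.1 ω ∈ Dc} ∩ {ω | X q.2 ω ∈ Dc})).toReal)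
      (Ioi t0 ×ˢ Ioi t0))
    (hAx1 : ∀ ω, (t0 : EReal) < Tc ω)
    (hAx2 : ∀ t > t0,
      Tendsto (fun Δt : ℝ =>
          cprob P {ω | (t : EReal) ≤ Tc ω ∧ Tc ω ≤ ((t + Δt : ℝ) : EReal)}
            {ω | (t : EReal) ≤ Tc ω ∧ X t ω ∈ Dc} / Δt)
        (𝓝[>] 0) (𝓝 α))
    (hAx3 : ∀ t > t0, ∀ S : Set ℝ, MeasurableSet S → S ⊆ Ioi t0 →
      (P ({ω | X t ω ∈ Dc} ∩ {ω | Tc ω ∈ Real.toEReal '' S})).toReal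
        = ∫ u in S, cprob P {ω | X t ω ∈ Dc} {ω | X u ω ∈ Dc}
            ∂((Measure.map Tc P).comap Real.toEReal)) :
    ∀ t > t0, P {ω | Tc ω = (t : EReal)} = 0 := by
  intro t ht
  by_contra h0
  -- the comap measure at the singleton {t}
  have hemb : MeasurableEmbedding (Real.toEReal) :=
    EReal.isOpenEmbedding_coe.measurableEmbedding
  set μ := (Measure.map Tc P).comap Real.toEReal with hμ
  have hμt : μ {t} = P {ω | Tc ω = (t : EReal)} := by
    rw [hμ, hemb.comap_apply, image_singleton,
      Measure.map_apply hTc (measurableSet_singleton _)]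
    rfl
  -- Step 2: P (X t ∈ Dc ∩ Tc = t) = P(Tc = t)  (toReal version)
  have key := hAx3 t ht {t} (measurableSet_singleton t) (by simpa using ht)
  have himg : {ω | Tc ω ∈ Real.toEReal '' ({t} : Set ℝ)} = {ω | Tc ω = (t : EReal)} := by
    ext ω; simp [Set.image_singleton]
  rw [himg] at key
  have hint : (∫ u in ({t} : Set ℝ), cprob P {ω | X t ω ∈ Dc} {ω | X u ω ∈ Dc} ∂μ)
      = (μ {t}).toReal * cprob P {ω | X t ω ∈ Dc} {ω | X t ω ∈ Dc} := by
    rw [Measure.restrict_singleton, integral_smul_measure, integral_dirac]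
    simp [mul_comm]
  have hPX : P {ω | X t ω ∈ Dc} ≠ 0 := (hC1 t ht).ne'
  have hPXfin : P {ω | X t ω ∈ Dc} ≠ ⊤ := measure_ne_top _ _
  have hcp1 : cprob P {ω | X t ω ∈ Dc} {ω | X t ω ∈ Dc} = 1 := by
    unfold cprob
    rw [Set.inter_self, div_self]
    simp [ENNReal.toReal_eq_zero_iff, hPX, hPXfin]
  rw [hint, hcp1, mul_one, hμt] at key
  set c : ℝ := (P {ω | Tc ω = (t : EReal)}).toReal with hc
  have hcpos : 0 < c := ENNReal.toReal_pos h0 (measure_ne_top _ _)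
  -- the event E
  set E : Set Ω := {ω | X t ω ∈ Dc} ∩ {ω | Tc ω = (t : EReal)} with hE
  have hPE : (P E).toReal = c := key
  -- Step 3: contradiction with Axiom 2
  have h2 := hAx2 t ht
  have hev1 : ∀ᶠ Δt : ℝ in 𝓝[>] 0,
      cprob P {ω | (t : EReal) ≤ Tc ω ∧ Tc ω ≤ ((t + Δt : ℝ) : EReal)}
        {ω | (t : EReal) ≤ Tc ω ∧ X t ω ∈ Dc} / Δt < α + 1 :=
    h2.eventually (Filter.Tendsto.eventually_lt_const (by linarith) tendsto_id)
  have hev2 : ∀ᶠ Δt : ℝ in 𝓝[>] 0, Δt ∈ Ioo 0 (c / (α + 1)) := by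
    apply Ioo_mem_nhdsGT
    positivity
  obtain ⟨Δt, h1, h2'⟩ := (hev1.and hev2).exists
  obtain ⟨hΔpos, hΔlt⟩ := h2'
  set A := {ω | (t : EReal) ≤ Tc ω ∧ Tc ω ≤ ((t + Δt : ℝ) : EReal)} with hA
  set B := {ω | (t : EReal) ≤ Tc ω ∧ X t ω ∈ Dc} with hB
  have hEsub : E ⊆ A ∩ B := by
    intro ω hω
    obtain ⟨hX', hT'⟩ := hω
    have h1 : (t : EReal) ≤ Tc ω := le_of_eq hT'.symm
    have h2 : Tc ω ≤ ((t + Δt : ℝ) : EReal) := by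
      rw [hT']
      exact_mod_cast (by linarith : t ≤ t + Δt)
    exact ⟨⟨h1, h2⟩, ⟨h1, hX'⟩⟩
  have hnum : c ≤ (P (A ∩ B)).toReal := by
    rw [← hPE]
    exact ENNReal.toReal_mono (measure_ne_top _ _) (measure_mono hEsub)
  have hden1 : (P B).toReal ≤ 1 := by
    have := prob_le_one (μ := P) (s := B)
    simpa using ENNReal.toReal_mono ENNReal.one_ne_top this
  have hdenpos : 0 < (P B).toReal := by
    have hEB : E ⊆ B := fun ω hω => (hEsub hω).2
    calc 0 < c := hcpos
    _ = (P E).toReal := hPE.symm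
    _ ≤ (P B).toReal := ENNReal.toReal_mono (measure_ne_top _ _) (measure_mono hEB)
  have hcpge : c ≤ cprob P A B := by
    unfold cprob
    rw [le_div_iff₀ hdenpos]
    calc c * (P B).toReal ≤ c * 1 := by
            exact mul_le_mul_of_nonneg_left hden1 hcpos.le
      _ = c := mul_one c
      _ ≤ (P (A ∩ B)).toReal := hnum
  have hlow : α + 1 < cprob P A B / Δt := by
    rw [lt_div_iff₀ hΔpos]
    calc (α + 1) * Δt < (α + 1) * (c / (α + 1)) := by
          exact mul_lt_mul_of_pos_left hΔlt (by linarith)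
      _ = c := by field_simp
      _ ≤ cprob P A B := hcpge
  exact absurd h1 (not_lt.2 hlow.le)
end

section
/- Right-derivative identity for the capture-time law: under Conditions C1, C2 and Axioms 1–3, for every t > t_0 the limit lim_{Δt → 0+} ℙ( T_c ∈ [t, t+Δt] ) / Δt exists and equals α · ℙ( T_c ≥ t and X̃(t) ∈ D_c ). -/
/-!
By Axiom 2, `ℙ(T_c ∈ [t, t+Δt], X̃(t) ∈ D_c) / Δt → α ℙ(T_c ≥ t, X̃(t) ∈ D_c)`. By Axiom 3 the
numerator is `∫_{[t, t+Δt]} g d(law of T_c)` with `g u = ℙ(X̃(t) ∈ D_c | X̃(u) ∈ D_c)`, and `g` is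
continuous at `t` with `g t = 1` by C1–C2. Hence for small `Δt` the numerator lies between
`(1 - ε) ℙ(T_c ∈ [t, t+Δt])` and `ℙ(T_c ∈ [t, t+Δt])`, which squeezes the latter to the same limit.
-/

open MeasureTheory Set Filter Topology

section ConditionalProbability

variable {Ω : Type*} [MeasurableSpace Ω] {P : Measure Ω} [IsFiniteMeasure P]

/-- Holds also when `P B = 0`, since then `cprob P A B = 0 = P (A ∩ B)`. -/
lemma cprob_mul_toReal (A B : Set Ω) :
    cprob P A B * (P B).toReal = (P (A ∩ B)).toReal := by
  rcases eq_or_ne (P B).toReal 0 with hB | hB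
  · have hAB : (P (A ∩ B)).toReal ≤ (P B).toReal :=
      ENNReal.toReal_mono (measure_ne_top P B) (measure_mono inter_subset_right)
    rw [hB, mul_zero]
    exact (le_antisymm (hAB.trans hB.le) ENNReal.toReal_nonneg).symm
  · exact div_mul_cancel₀ _ hB

lemma cprob_self {A : Set Ω} (hA : P A ≠ 0) : cprob P A A = 1 := by
  rw [cprob, inter_self]
  exact div_self (ENNReal.toReal_ne_zero.2 ⟨hA, measure_ne_top P A⟩)

lemma continuousOn_cprob {T : Type*} [TopologicalSpace T] {E : T → Set Ω} {s : Set T}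
    (hE : ContinuousOn (fun q : T × T => (P (E q.1 ∩ E q.2)).toReal) (s ×ˢ s))
    (hpos : ∀ u ∈ s, 0 < P (E u)) {t : T} (ht : t ∈ s) :
    ContinuousOn (fun u => cprob P (E t) (E u)) s := by
  have hnum : ContinuousOn (fun u => (P (E t ∩ E u)).toReal) s :=
    hE.comp (continuous_const.prodMk continuous_id).continuousOn fun u hu => mk_mem_prod ht hu
  have hden : ContinuousOn (fun u => (P (E u)).toReal) s := by
    simpa only [Function.comp_def, id, inter_self] using
      hE.comp (continuous_id.prodMk continuous_id).continuousOn fun u hu => mk_mem_prod hu hu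
  exact hnum.div hden fun u hu => ENNReal.toReal_ne_zero.2 ⟨(hpos u hu).ne', measure_ne_top _ _⟩

end ConditionalProbability

lemma comap_coe_map_apply {Ω : Type*} [MeasurableSpace Ω] (P : Measure Ω) {T : Ω → EReal}
    (hT : Measurable T) {S : Set ℝ} (hS : MeasurableSet S) :
    (P.map T).comap Real.toEReal S = P (T ⁻¹' (Real.toEReal '' S)) := by
  have hemb : MeasurableEmbedding Real.toEReal := EReal.isOpenEmbedding_coe.measurableEmbedding
  rw [hemb.comap_apply, Measure.map_apply hT (hemb.measurableSet_image' hS)]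

lemma tendsto_of_le_of_forall_one_sub_mul_le {ι : Type*} {l : Filter ι} {f F : ι → ℝ} {L : ℝ}
    (hf : Tendsto f l (𝓝 L)) (hle : ∀ᶠ x in l, f x ≤ F x)
    (hge : ∀ ε > 0, ∀ᶠ x in l, (1 - ε) * F x ≤ f x) : Tendsto F l (𝓝 L) := by
  rw [tendsto_order]
  refine ⟨fun a ha => ?_, fun b hb => ?_⟩
  · filter_upwards [(tendsto_order.1 hf).1 a ha, hle] with x hax hx using hax.trans_le hx
  · have hcont : Tendsto (fun ε : ℝ => L / (1 - ε)) (𝓝[>] 0) (𝓝 L) := by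
      have : ContinuousAt (fun ε : ℝ => L / (1 - ε)) 0 :=
        continuousAt_const.div (continuousAt_const.sub continuousAt_id) (by norm_num)
      simpa using this.tendsto.mono_left nhdsWithin_le_nhds
    obtain ⟨ε, hεb, hε0, hε1⟩ :=
      ((hcont.eventually (gt_mem_nhds hb)).and (Ioo_mem_nhdsGT one_pos)).exists
    have h1ε : 0 < 1 - ε := sub_pos.2 hε1
    filter_upwards [(tendsto_order.1 (hf.div_const (1 - ε))).2 b hεb, hge ε hε0] with x hxb hx
    exact ((le_div_iff₀ h1ε).2 (by linarith)).trans_lt hxb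

lemma eventually_forall_Icc_add_of_eventually_nhds {p : ℝ → Prop} {t : ℝ}
    (h : ∀ᶠ u in 𝓝 t, p u) : ∀ᶠ Δt in 𝓝[>] 0, ∀ u ∈ Icc t (t + Δt), p u := by
  have hIcc : Tendsto (fun Δt => Icc t (t + Δt)) (𝓝[>] 0) (𝓝 t).smallSets := by
    refine tendsto_const_nhds.Icc <|
      ((continuous_const.add continuous_id).tendsto' 0 t (add_zero t)).mono_left
        nhdsWithin_le_nhds
  exact hIcc.eventually (eventually_smallSets_forall.2 h)

lemma eventually_one_sub_mul_measureReal_le_setIntegral {μ : Measure ℝ} [IsFiniteMeasure μ]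
    {g : ℝ → ℝ} {t : ℝ} {U : Set ℝ} (hU : U ∈ 𝓝 t) (hg : ContinuousOn g U) (hgt : g t = 1)
    {ε : ℝ} (hε : 0 < ε) :
    ∀ᶠ Δt in 𝓝[>] 0,
      (1 - ε) * μ.real (Icc t (t + Δt)) ≤ ∫ u in Icc t (t + Δt), g u ∂μ := by
  have hnear : ∀ᶠ u in 𝓝 t, u ∈ U ∧ 1 - ε ≤ g u :=
    Filter.Eventually.and hU ((hg.continuousAt hU).eventually (Ici_mem_nhds (by linarith)))
  filter_upwards [eventually_forall_Icc_add_of_eventually_nhds hnear] with Δt hΔt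
  exact setIntegral_ge_of_const_le_real measurableSet_Icc (measure_ne_top _ _)
    (fun u hu => (hΔt u hu).2) (hg.mono fun u hu => (hΔt u hu).1).integrableOn_Icc

theorem capture_time_right_derivative_general
    {Ω : Type*} [MeasurableSpace Ω] (P : Measure Ω) [IsProbabilityMeasure P]
    (t0 : ℝ) {d : ℕ}
    (Dc : Set (Fin d → ℝ))
    (X : ℝ → Ω → (Fin d → ℝ))
    (Tc : Ω → EReal) (hTc : Measurable Tc)
    (α : ℝ)
    (hC1 : ∀ t > t0, 0 < P {ω | X t ω ∈ Dc})
    (hC2 : ContinuousOn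
      (fun q : ℝ × ℝ => (P ({ω | X q.1 ω ∈ Dc} ∩ {ω | X q.2 ω ∈ Dc})).toReal)
      (Ioi t0 ×ˢ Ioi t0))
    (hAx2 : ∀ t > t0,
      Tendsto (fun Δt : ℝ =>
          cprob P {ω | (t : EReal) ≤ Tc ω ∧ Tc ω ≤ ((t + Δt : ℝ) : EReal)}
            {ω | (t : EReal) ≤ Tc ω ∧ X t ω ∈ Dc} / Δt)
        (𝓝[>] 0) (𝓝 α))
    (hAx3 : ∀ t > t0, ∀ S : Set ℝ, MeasurableSet S → S ⊆ Ioi t0 →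
      (P ({ω | X t ω ∈ Dc} ∩ {ω | Tc ω ∈ Real.toEReal '' S})).toReal
        = ∫ u in S, cprob P {ω | X t ω ∈ Dc} {ω | X u ω ∈ Dc}
            ∂((Measure.map Tc P).comap Real.toEReal)) :
    ∀ t > t0,
      Tendsto (fun Δt : ℝ =>
          (P {ω | (t : EReal) ≤ Tc ω ∧ Tc ω ≤ ((t + Δt : ℝ) : EReal)}).toReal / Δt)
        (𝓝[>] 0)
        (𝓝 (α * (P {ω | (t : EReal) ≤ Tc ω ∧ X t ω ∈ Dc}).toReal)) := by
  intro t ht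
  set μ : Measure ℝ := (Measure.map Tc P).comap Real.toEReal
  set E : ℝ → Set Ω := fun u => {ω | X u ω ∈ Dc}
  set A : ℝ → Set Ω := fun Δt => {ω | (t : EReal) ≤ Tc ω ∧ Tc ω ≤ ((t + Δt : ℝ) : EReal)}
  have hA : ∀ Δt, A Δt = Tc ⁻¹' (Real.toEReal '' Icc t (t + Δt)) := fun Δt => by
    rw [EReal.image_coe_Icc]; rfl
  have hμA : ∀ Δt, μ.real (Icc t (t + Δt)) = (P (A Δt)).toReal := fun Δt => by
    rw [measureReal_def, comap_coe_map_apply P hTc measurableSet_Icc, hA]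
  have hEA : ∀ Δt, (P (E t ∩ A Δt)).toReal = ∫ u in Icc t (t + Δt), cprob P (E t) (E u) ∂μ :=
    fun Δt => by
      rw [hA]
      exact hAx3 t ht _ measurableSet_Icc fun u hu => ht.trans_le hu.1
  have hlim : Tendsto (fun Δt => (P (E t ∩ A Δt)).toReal / Δt) (𝓝[>] 0)
      (𝓝 (α * (P {ω | (t : EReal) ≤ Tc ω ∧ X t ω ∈ Dc}).toReal)) := by
    refine ((hAx2 t ht).mul_const _).congr fun Δt => ?_
    rw [div_mul_eq_mul_div, cprob_mul_toReal]
    congr 3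
    ext ω
    simp only [E, A, mem_inter_iff, mem_ofPred_eq]
    tauto
  refine tendsto_of_le_of_forall_one_sub_mul_le hlim ?_ fun ε hε => ?_
  · filter_upwards [self_mem_nhdsWithin] with Δt hΔt
    exact div_le_div_of_nonneg_right
      (ENNReal.toReal_mono (measure_ne_top _ _) (measure_mono inter_subset_right)) hΔt.le
  · filter_upwards [eventually_one_sub_mul_measureReal_le_setIntegral (μ := μ)
      (Ioi_mem_nhds ht) (continuousOn_cprob hC2 hC1 ht) (cprob_self (hC1 t ht).ne') hε,
      self_mem_nhdsWithin] with Δt hΔt hpos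
    rw [← mul_div_assoc, hEA, ← hμA]
    exact div_le_div_of_nonneg_right hΔt hpos.le

/-- Right-derivative identity for the capture-time law: under Conditions C1–C2 and
Axioms 1–3, for every `t > t₀`, `lim_{Δt → 0⁺} ℙ(T_c ∈ [t, t+Δt]) / Δt` exists and
equals `α·ℙ(T_c ≥ t, X̃(t) ∈ D_c)`. -/
theorem capture_time_right_derivative
    {Ω : Type*} [MeasurableSpace Ω] (P : Measure Ω) [IsProbabilityMeasure P]
    (t0 : ℝ) {d : ℕ} (hd : 1 ≤ d)
    (Dc : Set (Fin d → ℝ)) (hDc : MeasurableSet Dc)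
    (X : ℝ → Ω → (Fin d → ℝ)) (hX : ∀ t, Measurable (X t))
    (Tc : Ω → EReal) (hTc : Measurable Tc)
    (α : ℝ) (hα : 0 < α)
    (hC1 : ∀ t > t0, 0 < P {ω | X t ω ∈ Dc})
    (hC2 : ContinuousOn
      (fun q : ℝ × ℝ => (P ({ω | X q.1 ω ∈ Dc} ∩ {ω | X q.2 ω ∈ Dc})).toReal)
      (Ioi t0 ×ˢ Ioi t0))
    (hAx1 : ∀ ω, (t0 : EReal) < Tc ω)
    (hAx2 : ∀ t > t0,
      Tendsto (fun Δt : ℝ =>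
          cprob P {ω | (t : EReal) ≤ Tc ω ∧ Tc ω ≤ ((t + Δt : ℝ) : EReal)}
            {ω | (t : EReal) ≤ Tc ω ∧ X t ω ∈ Dc} / Δt)
        (𝓝[>] 0) (𝓝 α))
    (hAx3 : ∀ t > t0, ∀ S : Set ℝ, MeasurableSet S → S ⊆ Ioi t0 →
      (P ({ω | X t ω ∈ Dc} ∩ {ω | Tc ω ∈ Real.toEReal '' S})).toReal
        = ∫ u in S, cprob P {ω | X t ω ∈ Dc} {ω | X u ω ∈ Dc}
            ∂((Measure.map Tc P).comap Real.toEReal)) :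
    ∀ t > t0,
      Tendsto (fun Δt : ℝ =>
          (P {ω | (t : EReal) ≤ Tc ω ∧ Tc ω ≤ ((t + Δt : ℝ) : EReal)}).toReal / Δt)
        (𝓝[>] 0)
        (𝓝 (α * (P {ω | (t : EReal) ≤ Tc ω ∧ X t ω ∈ Dc}).toReal)) :=
  capture_time_right_derivative_general P t0 Dc X Tc hTc α hC1 hC2 hAx2 hAx3
end

section
/- Density of the hypothetical second-capture time: under Conditions C1, C2 and Axioms 1–3, let f_{T_c} denote the continuous density of the law of T_c on (t_0, ∞). Then for every u > t_0 such that ℙ( T_c > u and X̃(u) ∈ D_c ) > 0 (equivalently f_{T_c}(u) > 0), and every Borel set B ⊆ ℝ, ℙ( T_c ∈ B | T_c > u and X̃(u) ∈ D_c ) = ∫_{B ∩ (u,∞)} α · ℙ( X̃(u) ∈ D_c | X̃(v) ∈ D_c ) · f_{T_c}(v) / f_{T_c}(u) dv. In the Capture model with one release time this is the conditional density of the hypothetical second-capture time T̃_c^{(2)} given first capture at time u. -/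
open MeasureTheory Set Filter Topology

/-- Density of the hypothetical second-capture time: for `u > t₀` with
`ℙ(T_c > u, X̃(u) ∈ D_c) > 0` and any Borel `B ⊆ ℝ`,
`ℙ(T_c ∈ B | T_c > u, X̃(u) ∈ D_c)
  = ∫_{B ∩ (u,∞)} α·ℙ(X̃(u) ∈ D_c | X̃(v) ∈ D_c)·f(v)/f(u) dv`. -/
theorem second_capture_time_density
    {Ω : Type*} [MeasurableSpace Ω] (P : Measure Ω) [IsProbabilityMeasure P]
    (t0 : ℝ) {d : ℕ} (hd : 1 ≤ d)
    (Dc : Set (Fin d → ℝ)) (hDc : MeasurableSet Dc)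
    (X : ℝ → Ω → (Fin d → ℝ)) (hX : ∀ t, Measurable (X t))
    (Tc : Ω → EReal) (hTc : Measurable Tc)
    (α : ℝ) (hα : 0 < α)
    (hC1 : ∀ t > t0, 0 < P {ω | X t ω ∈ Dc})
    (hC2 : ContinuousOn
      (fun q : ℝ × ℝ => (P ({ω | X q.1 ω ∈ Dc} ∩ {ω | X q.2 ω ∈ Dc})).toReal)
      (Ioi t0 ×ˢ Ioi t0))
    (hAx1 : ∀ ω, (t0 : EReal) < Tc ω)
    (hAx2 : ∀ t > t0,
      Tendsto (fun Δt : ℝ =>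
          cprob P {ω | (t : EReal) ≤ Tc ω ∧ Tc ω ≤ ((t + Δt : ℝ) : EReal)}
            {ω | (t : EReal) ≤ Tc ω ∧ X t ω ∈ Dc} / Δt)
        (𝓝[>] 0) (𝓝 α))
    (hAx3 : ∀ t > t0, ∀ S : Set ℝ, MeasurableSet S → S ⊆ Ioi t0 →
      (P ({ω | X t ω ∈ Dc} ∩ {ω | Tc ω ∈ Real.toEReal '' S})).toReal
        = ∫ u in S, cprob P {ω | X t ω ∈ Dc} {ω | X u ω ∈ Dc}
            ∂((Measure.map Tc P).comap Real.toEReal))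
    -- `f` is the continuous density of the law of `T_c` on `(t₀, ∞)`
    (f : ℝ → ℝ) (hf_cont : ContinuousOn f (Ioi t0))
    (hf_eq : ∀ t > t0, f t = α * (P {ω | (t : EReal) ≤ Tc ω ∧ X t ω ∈ Dc}).toReal)
    (hf_dens : ∀ S : Set ℝ, MeasurableSet S → S ⊆ Ioi t0 →
      ((Measure.map Tc P).comap Real.toEReal) S = ENNReal.ofReal (∫ u in S, f u)) :
    ∀ u > t0, 0 < P {ω | (u : EReal) < Tc ω ∧ X u ω ∈ Dc} →
      ∀ B : Set ℝ, MeasurableSet B →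
        cprob P {ω | Tc ω ∈ Real.toEReal '' B}
            {ω | (u : EReal) < Tc ω ∧ X u ω ∈ Dc}
          = ∫ v in B ∩ Ioi u,
              α * cprob P {ω | X u ω ∈ Dc} {ω | X v ω ∈ Dc} * f v / f u := by
  intro u hu hPos B hB
  set μ := (Measure.map Tc P).comap Real.toEReal with hμdef
  have hemb : MeasurableEmbedding (Real.toEReal) :=
    EReal.isOpenEmbedding_coe.measurableEmbedding
  have hmapP : IsProbabilityMeasure (Measure.map Tc P) :=
    Measure.isProbabilityMeasure_map hTc.aemeasurable
  have hμle : ∀ T : Set ℝ, μ T ≤ 1 := by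
    intro T
    rw [hμdef, hemb.comap_apply]
    exact (measure_mono (subset_univ _)).trans_eq measure_univ
  have hf_nonneg : ∀ t ∈ Ioi t0, 0 ≤ f t := by
    intro t ht
    rw [hf_eq t ht]
    positivity
  -- `P (Tc = u) = 0`
  have hTcu : P {ω | Tc ω = (u : EReal)} = 0 := by
    have h1 : μ {u} = 0 := by
      rw [hf_dens {u} (measurableSet_singleton u) (by simpa using hu)]
      simp
    have h2 : μ {u} = P {ω | Tc ω = (u : EReal)} := by
      rw [hμdef, hemb.comap_apply, image_singleton,
        Measure.map_apply hTc (measurableSet_singleton _)]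
      rfl
    rw [← h2, h1]
  -- strict vs non-strict denominator
  have hden : P {ω | (u : EReal) < Tc ω ∧ X u ω ∈ Dc}
      = P {ω | (u : EReal) ≤ Tc ω ∧ X u ω ∈ Dc} := by
    refine le_antisymm (measure_mono fun ω hω => ⟨hω.1.le, hω.2⟩) ?_
    calc P {ω | (u : EReal) ≤ Tc ω ∧ X u ω ∈ Dc}
        ≤ P ({ω | (u : EReal) < Tc ω ∧ X u ω ∈ Dc} ∪ {ω | Tc ω = (u : EReal)}) := by
          refine measure_mono fun ω hω => ?_
          rcases hω.1.lt_or_eq with h | h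
          · exact Or.inl ⟨h, hω.2⟩
          · exact Or.inr h.symm
      _ ≤ P {ω | (u : EReal) < Tc ω ∧ X u ω ∈ Dc} + P {ω | Tc ω = (u : EReal)} :=
          measure_union_le _ _
      _ = P {ω | (u : EReal) < Tc ω ∧ X u ω ∈ Dc} := by rw [hTcu, add_zero]
  have hfu : f u = α * (P {ω | (u : EReal) < Tc ω ∧ X u ω ∈ Dc}).toReal := by
    rw [hf_eq u hu, hden]
  have hDen_pos : 0 < (P {ω | (u : EReal) < Tc ω ∧ X u ω ∈ Dc}).toReal :=
    ENNReal.toReal_pos hPos.ne' (measure_ne_top _ _)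
  have hfu_pos : 0 < f u := by rw [hfu]; positivity
  -- the numerator set
  set S := B ∩ Ioi u with hSdef
  have hSm : MeasurableSet S := hB.inter measurableSet_Ioi
  have hSsub : S ⊆ Ioi t0 := fun v hv => lt_trans hu hv.2
  have hsets : {ω | Tc ω ∈ Real.toEReal '' B} ∩ {ω | (u : EReal) < Tc ω ∧ X u ω ∈ Dc}
      = {ω | X u ω ∈ Dc} ∩ {ω | Tc ω ∈ Real.toEReal '' S} := by
    ext ω
    simp only [mem_inter_iff, mem_setOf_eq, mem_image, hSdef, mem_inter_iff, mem_Ioi]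
    constructor
    · rintro ⟨⟨b, hbB, hbeq⟩, hlt, hXu⟩
      refine ⟨hXu, b, ⟨hbB, ?_⟩, hbeq⟩
      rw [← hbeq] at hlt
      exact_mod_cast hlt
    · rintro ⟨hXu, b, ⟨hbB, hbu⟩, hbeq⟩
      refine ⟨⟨b, hbB, hbeq⟩, ?_, hXu⟩
      rw [← hbeq]
      exact_mod_cast hbu
  -- density as nonnegative function
  set ρ : ℝ → NNReal := fun v => Real.toNNReal (f v) with hρdef
  set m : Measure ℝ := volume.withDensity (fun v => (ρ v : ENNReal)) with hmdef
  -- μ and m agree on measurable subsets of Ioi t0 on which f is integrable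
  have hkey : ∀ T : Set ℝ, MeasurableSet T → T ⊆ Ioi t0 → IntegrableOn f T → μ T = m T := by
    intro T hT hTsub hTint
    have h0 : 0 ≤ᵐ[volume.restrict T] f :=
      (ae_restrict_iff' hT).2 (Eventually.of_forall fun v hv => hf_nonneg v (hTsub hv))
    rw [hf_dens T hT hTsub, ofReal_integral_eq_lintegral_ofReal hTint h0,
      hmdef, withDensity_apply _ hT]
    rfl
  -- f is integrable on Ioi u
  have hint : IntegrableOn f (Ioi u) := by
    have hmono : Monotone (fun n : ℕ => Icc (u + 1 / (n + 1)) (u + n)) := by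
      intro a b hab
      have h1 : (1:ℝ) / (b + 1) ≤ 1 / (a + 1) := by
        apply one_div_le_one_div_of_le
        · positivity
        · exact_mod_cast Nat.succ_le_succ hab
      have h2 : (a:ℝ) ≤ b := by exact_mod_cast hab
      exact Icc_subset_Icc (by linarith) (by linarith)
    have hUnion : (⋃ n : ℕ, Icc (u + 1 / (n + 1 : ℝ)) (u + n)) = Ioi u := by
      ext v
      simp only [mem_iUnion, mem_Icc, mem_Ioi]
      constructor
      · rintro ⟨n, h1, _⟩
        have : (0 : ℝ) < 1 / (n + 1) := by positivity
        linarith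
      · intro hv
        obtain ⟨n, hn⟩ := exists_nat_one_div_lt (sub_pos.2 hv)
        obtain ⟨k, hk⟩ := exists_nat_ge (v - u)
        refine ⟨n + k, ?_, ?_⟩
        · have h1 : 1 / ((n + k : ℕ) + 1 : ℝ) ≤ 1 / (n + 1 : ℝ) := by
            apply one_div_le_one_div_of_le
            · positivity
            · push_cast; linarith [Nat.cast_nonneg (α := ℝ) k]
          linarith
        · have : (k : ℝ) ≤ ((n + k : ℕ) : ℝ) := by
            push_cast; linarith [Nat.cast_nonneg (α := ℝ) n]
          linarith
    have hIccsub : ∀ n : ℕ, Icc (u + 1 / (n + 1 : ℝ)) (u + n) ⊆ Ioi t0 := by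
      intro n v hv
      have : (0 : ℝ) < 1 / (n + 1) := by positivity
      have := hv.1
      simp only [mem_Ioi]
      linarith
    have hIccInt : ∀ n : ℕ, IntegrableOn f (Icc (u + 1 / (n + 1 : ℝ)) (u + n)) := fun n =>
      (hf_cont.mono (hIccsub n)).integrableOn_compact isCompact_Icc
    have hmIcc : ∀ n : ℕ, m (Icc (u + 1 / (n + 1 : ℝ)) (u + n)) ≤ 1 := by
      intro n
      rw [← hkey _ measurableSet_Icc (hIccsub n) (hIccInt n)]
      exact hμle _
    have hmIoi : m (Ioi u) ≤ 1 := by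
      rw [← hUnion, hmono.measure_iUnion]
      exact iSup_le hmIcc
    constructor
    · exact (hf_cont.mono fun v hv => lt_trans hu hv).aestronglyMeasurable measurableSet_Ioi
    · rw [hasFiniteIntegral_iff_ofReal ((ae_restrict_iff' measurableSet_Ioi).2
        (Eventually.of_forall fun v hv => hf_nonneg v (lt_trans hu hv)))]
      have : ∫⁻ v in Ioi u, ENNReal.ofReal (f v) = m (Ioi u) := by
        rw [hmdef, withDensity_apply _ measurableSet_Ioi]
        rfl
      rw [this]
      exact lt_of_le_of_lt hmIoi ENNReal.one_lt_top
  -- μ and m agree on S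
  have hSint : IntegrableOn f S := hint.mono_set fun v hv => hv.2
  have hrestr : μ.restrict S = m.restrict S := by
    refine Measure.ext fun T hT => ?_
    rw [Measure.restrict_apply hT, Measure.restrict_apply hT]
    exact hkey _ (hT.inter hSm) (fun v hv => hSsub hv.2)
      (hSint.mono_set fun v hv => hv.2)
  -- the function under the integral
  set g : ℝ → ℝ := fun v => cprob P {ω | X u ω ∈ Dc} {ω | X v ω ∈ Dc} with hgdef
  have hρae : AEMeasurable ρ (volume.restrict S) := by
    have h1 : AEMeasurable f (volume.restrict (Ioi t0)) :=
      hf_cont.aemeasurable measurableSet_Ioi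
    have h2 : AEMeasurable f (volume.restrict S) :=
      h1.mono_measure (Measure.restrict_mono hSsub le_rfl)
    exact measurable_real_toNNReal.comp_aemeasurable h2
  have hIntEq : ∫ v in S, g v ∂μ = ∫ v in S, f v * g v := by
    rw [hrestr]
    rw [hmdef, setIntegral_withDensity_eq_setIntegral_smul₀ hρae g hSm]
    refine setIntegral_congr_fun hSm fun v hv => ?_
    simp only [NNReal.smul_def, smul_eq_mul, hρdef]
    rw [Real.coe_toNNReal _ (hf_nonneg v (hSsub hv))]
  -- numerator via Axiom 3
  have hnum : (P ({ω | Tc ω ∈ Real.toEReal '' B}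
      ∩ {ω | (u : EReal) < Tc ω ∧ X u ω ∈ Dc})).toReal = ∫ v in S, f v * g v := by
    rw [hsets, hAx3 u hu S hSm hSsub, ← hIntEq]
  -- final computation
  rw [cprob, hnum]
  have hfinal : ∀ v : ℝ, α * g v * f v / f u = (α / f u) * (f v * g v) := by
    intro v; ring
  calc (∫ v in S, f v * g v) / (P {ω | (u : EReal) < Tc ω ∧ X u ω ∈ Dc}).toReal
      = (α / f u) * ∫ v in S, f v * g v := by
        have : (P {ω | (u : EReal) < Tc ω ∧ X u ω ∈ Dc}).toReal = f u / α := by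
          rw [hfu]; field_simp
        rw [this, div_div_eq_mul_div]; ring
    _ = ∫ v in S, (α / f u) * (f v * g v) := (integral_const_mul _ _).symm
    _ = ∫ v in S, α * cprob P {ω | X u ω ∈ Dc} {ω | X v ω ∈ Dc} * f v / f u := by
        refine integral_congr_ae (Eventually.of_forall fun v => ?_)
        simp only [hgdef]
        ring
end
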